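/- arXiv:2602.15739 — 2 statements merged into one kernel-verified Lean document; each statement's English description precedes it below -/
import Mathlib

section
/- Let N = (P,T,F) be a safe and sound WF-net, let G = {T_1,…,T_n} be a conflict-hiding partition of T, and let ⊏ be the transitive closure of the execution order order(N,G). If i ⊏ j, then in every firing sequence of N leading from the marking [source] to the marking [sink], every firing of a transition of T_i occurs before every firing of a transition of T_j. -/
/-!
Common formalization of Petri nets, workflow nets (WF-nets), POWL 2.0 models,
and the WF-net-to-POWL conversion algorithm.
-/

noncomputable section
attribute [local instance] Classical.propDecidable

/-- A Petri-net-like structure over natural-number nodes, with designated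
source/sink places and a labeling of transitions (`none` = silent τ). -/
structure Net where
  places : Finset ℕ
  transitions : Finset ℕ
  flow : Finset (ℕ × ℕ)
  label : ℕ → Option ℕ
  source : ℕ
  sink : ℕ

abbrev Marking := ℕ → ℕ

namespace Net

/-- Pre-set of a node. -/
def pre (N : Net) (x : ℕ) : Finset ℕ := (N.flow.filter fun e => e.2 = x).image Prod.fst

/-- Post-set of a node. -/
def post (N : Net) (x : ℕ) : Finset ℕ := (N.flow.filter fun e => e.1 = x).image Prod.snd

/-- `N` is a Petri net: places and transitions are finite disjoint sets and
the flow only connects places to transitions and vice versa. -/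
def IsPetri (N : Net) : Prop :=
  Disjoint N.places N.transitions ∧
  ∀ e ∈ N.flow, (e.1 ∈ N.places ∧ e.2 ∈ N.transitions) ∨ (e.1 ∈ N.transitions ∧ e.2 ∈ N.places)

/-- Directed-path (reflexive-transitive) reachability along the flow relation. -/
def pathRel (N : Net) : ℕ → ℕ → Prop := Relation.ReflTransGen (fun a b => (a, b) ∈ N.flow)

/-- `N` is a workflow net: a Petri net with a unique source place, a unique
sink place, and every node on a path from the source to the sink. -/
def IsWF (N : Net) : Prop :=
  N.IsPetri ∧
  N.source ∈ N.places ∧ N.sink ∈ N.places ∧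
  (∀ p ∈ N.places, N.pre p = ∅ ↔ p = N.source) ∧
  (∀ p ∈ N.places, N.post p = ∅ ↔ p = N.sink) ∧
  (∀ x ∈ N.places ∪ N.transitions, N.pathRel N.source x ∧ N.pathRel x N.sink)

/-- A transition is enabled at a marking if every place of its pre-set holds a token. -/
def enabled (N : Net) (t : ℕ) (M : Marking) : Prop :=
  t ∈ N.transitions ∧ ∀ p ∈ N.pre t, 1 ≤ M p

/-- Firing an enabled transition consumes one token from each input place and
produces one token in each output place. -/
def fire (N : Net) (t : ℕ) (M M' : Marking) : Prop :=
  N.enabled t M ∧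
  ∀ p, M' p + (if p ∈ N.pre t then 1 else 0) = M p + (if p ∈ N.post t then 1 else 0)

/-- `N.firingSeq M σ M'`: firing the sequence σ of transitions leads from M to M'. -/
def firingSeq (N : Net) : Marking → List ℕ → Marking → Prop
  | M, [], M' => M' = M
  | M, t :: σ, M' => ∃ M₁, N.fire t M M₁ ∧ N.firingSeq M₁ σ M'

/-- A marking is reachable from another if some firing sequence leads to it. -/
def reachable (N : Net) (M M' : Marking) : Prop := ∃ σ, N.firingSeq M σ M'

/-- The initial marking [source]. -/
def initM (N : Net) : Marking := fun p => if p = N.source then 1 else 0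

/-- The final marking [sink]. -/
def finalM (N : Net) : Marking := fun p => if p = N.sink then 1 else 0

/-- Soundness: no dead transitions, option to complete, proper completion. -/
def Sound (N : Net) : Prop :=
  (∀ t ∈ N.transitions, ∃ M, N.reachable N.initM M ∧ N.enabled t M) ∧
  (∀ M, N.reachable N.initM M → N.reachable M N.finalM) ∧
  (∀ M, N.reachable N.initM M → 1 ≤ M N.sink → M = N.finalM)

/-- Safeness: each place holds at most one token in every reachable marking. -/
def Safe (N : Net) : Prop :=
  ∀ M, N.reachable N.initM M → ∀ p, M p ≤ 1

/-- The language: label sequences (τ omitted) of firing sequences from [source] to [sink]. -/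
def lang (N : Net) : Set (List ℕ) :=
  { w | ∃ σ, N.firingSeq N.initM σ N.finalM ∧ w = σ.filterMap N.label }

/-- The entry points ◦T' of a set of transitions T'. -/
def entry (N : Net) (T' : Finset ℕ) : Finset ℕ :=
  N.places.filter fun p =>
    (N.post p ∩ T').Nonempty ∧ (p = N.source ∨ (N.pre p ∩ (N.transitions \ T')).Nonempty)

/-- The exit points T'◦ of a set of transitions T'. -/
def exit (N : Net) (T' : Finset ℕ) : Finset ℕ :=
  N.places.filter fun p =>
    (N.pre p ∩ T').Nonempty ∧ (p = N.sink ∨ (N.post p ∩ (N.transitions \ T')).Nonempty)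

/-- Two places are equivalent with respect to T'. -/
def equivWrt (N : Net) (T' : Finset ℕ) (p p' : ℕ) : Prop :=
  N.pre p ∩ T' = N.pre p' ∩ T' ∧ N.post p ∩ T' = N.post p' ∩ T'

/-- The places adjacent to some transition of T' (written P|_{T'}). -/
def adjP (N : Net) (T' : Finset ℕ) : Finset ℕ :=
  N.places.filter fun p => ((N.pre p ∪ N.post p) ∩ T').Nonempty

/-- A natural number larger than every node of N. -/
def freshBase (N : Net) : ℕ :=
  ((N.places ∪ N.transitions ∪ {N.source, N.sink}).sup id) + 1

end Net

/-- `G : Fin n → Finset ℕ` is a partition of the transitions of N into n nonempty parts. -/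
def IsPartition (N : Net) {n : ℕ} (G : Fin n → Finset ℕ) : Prop :=
  (∀ i, (G i).Nonempty) ∧
  (∀ i j, i ≠ j → Disjoint (G i) (G j)) ∧
  Finset.univ.biUnion G = N.transitions

/-- A conflict-hiding partition. -/
def ConflictHiding (N : Net) {n : ℕ} (G : Fin n → Finset ℕ) : Prop :=
  IsPartition N G ∧
  (∀ p, ∀ i j : Fin n, p ∈ N.entry (G i) → p ∈ N.entry (G j) → i = j) ∧
  (∀ p, ∀ i j : Fin n, p ∈ N.exit (G i) → p ∈ N.exit (G j) → i = j) ∧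
  (∀ i : Fin n, ∀ p ∈ N.entry (G i), ∀ p' ∈ N.entry (G i), N.equivWrt (G i) p p') ∧
  (∀ i : Fin n, ∀ p ∈ N.exit (G i), ∀ p' ∈ N.exit (G i), N.equivWrt (G i) p p')

/-- A concurrency-hiding partition: each part has exactly one entry and one exit point. -/
def ConcurrencyHiding (N : Net) {n : ℕ} (G : Fin n → Finset ℕ) : Prop :=
  IsPartition N G ∧ ∀ i, (N.entry (G i)).card = 1 ∧ (N.exit (G i)).card = 1

/-- Normalize(N, p_s, p_e): insert a fresh source (resp. sink) place connected
to p_s (resp. from p_e) through a fresh τ-transition whenever needed. -/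
def Normalize (N : Net) (ps pe : ℕ) : Net :=
  let b := N.freshBase
  let needS := (N.pre ps).Nonempty
  let needE := (N.post pe).Nonempty
  { places := N.places ∪ (if needS then {b} else ∅) ∪ (if needE then {b+2} else ∅)
    transitions := N.transitions ∪ (if needS then {b+1} else ∅) ∪ (if needE then {b+3} else ∅)
    flow := N.flow ∪ (if needS then {(b, b+1), (b+1, ps)} else ∅)
                   ∪ (if needE then {(pe, b+3), (b+3, b+2)} else ∅)
    label := fun x => if x = b+1 ∨ x = b+3 then none else N.label x
    source := if needS then b else ps
    sink := if needE then b+2 else pe }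

/-- The raw partial-order projection of N onto a part T' (before normalization). -/
def poprojectRaw (N : Net) (T' : Finset ℕ) : Net :=
  let b := N.freshBase
  let ps := b
  let pe := b + 1
  let keptP := (N.adjP T' \ (N.entry T' ∪ N.exit T')) ∪ {ps, pe}
  { places := keptP
    transitions := T'
    flow :=
      (N.flow.filter fun e => (e.1 ∈ keptP ∧ e.2 ∈ T') ∨ (e.1 ∈ T' ∧ e.2 ∈ keptP))
      ∪ ((T'.filter fun t => (N.entry T' ∩ N.pre t).Nonempty).image fun t => (ps, t))
      ∪ ((T'.filter fun t => (N.entry T' ∩ N.post t).Nonempty).image fun t => (t, ps))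
      ∪ ((T'.filter fun t => (N.exit T' ∩ N.pre t).Nonempty).image fun t => (pe, t))
      ∪ ((T'.filter fun t => (N.exit T' ∩ N.post t).Nonempty).image fun t => (t, pe))
    label := N.label
    source := ps
    sink := pe }

/-- The partial-order projection poproject(N, T'). -/
def poproject (N : Net) (T' : Finset ℕ) : Net :=
  let R := poprojectRaw N T'
  Normalize R R.source R.sink

/-- The raw choice-graph projection of N onto a part T' (before normalization). -/
def cgprojectRaw (N : Net) (T' : Finset ℕ) : Net :=
  let keptP := N.adjP T'
  { places := keptP
    transitions := T'
    flow := N.flow.filter fun e => (e.1 ∈ keptP ∧ e.2 ∈ T') ∨ (e.1 ∈ T' ∧ e.2 ∈ keptP)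
    label := N.label
    source := (N.entry T').sup id
    sink := (N.exit T').sup id }

/-- The choice-graph projection cgproject(N, T'). -/
def cgproject (N : Net) (T' : Finset ℕ) : Net :=
  let R := cgprojectRaw N T'
  Normalize R R.source R.sink

/-- The execution order order(N,G): i ⊏ j iff T_i◦ ∩ ◦T_j ≠ ∅.
(Also the edge relation of the execution flow flow(N,G).) -/
def execOrder (N : Net) {n : ℕ} (G : Fin n → Finset ℕ) (i j : Fin n) : Prop :=
  (N.exit (G i) ∩ N.entry (G j)).Nonempty

/-- Start edges of flow(N,G): parts whose entry points contain the source of N. -/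
def cgStart (N : Net) {n : ℕ} (G : Fin n → Finset ℕ) : Set (Fin n) :=
  { i | N.source ∈ N.entry (G i) }

/-- End edges of flow(N,G): parts whose exit points contain the sink of N. -/
def cgEnd (N : Net) {n : ℕ} (G : Fin n → Finset ℕ) : Set (Fin n) :=
  { i | N.sink ∈ N.exit (G i) }

/-! ### POWL 2.0 models -/

/-- POWL 2.0 models: labeled transitions, partial-order nodes, and
choice-graph nodes.  A choice graph over `Fin n` is represented by the set of
successors of the start node, the set of predecessors of the end node, and the
edge relation between the inner nodes. -/
inductive POWL : Type where
  | ptrans : Option ℕ → POWL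
  | po : (n : ℕ) → (Fin n → Fin n → Prop) → (Fin n → POWL) → POWL
  | cg : (n : ℕ) → Set (Fin n) → Set (Fin n) → (Fin n → Fin n → Prop) → (Fin n → POWL) → POWL

/-- `p` is a path of a choice graph: nonempty, it starts at a successor of the
start node, ends at a predecessor of the end node, and follows edges. -/
def CGPath {n : ℕ} (sE eE : Set (Fin n)) (ed : Fin n → Fin n → Prop) (p : List (Fin n)) : Prop :=
  ∃ h : p ≠ [], p.head h ∈ sE ∧ p.getLast h ∈ eE ∧ p.Chain' ed

/-- Validity of a choice graph: start is the unique node with no incoming edge,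
end is the unique node with no outgoing edge, and every node lies on a directed
path from start to end. -/
def IsChoiceGraph {n : ℕ} (sE eE : Set (Fin n)) (ed : Fin n → Fin n → Prop) : Prop :=
  sE.Nonempty ∧ eE.Nonempty ∧
  (∀ i, i ∈ sE ∨ ∃ j, ed j i) ∧
  (∀ i, i ∈ eE ∨ ∃ j, ed i j) ∧
  (∀ i, ∃ p, CGPath sE eE ed p ∧ i ∈ p)

/-- σ is an order-preserving shuffle of the sequences `f 0, …, f (n-1)` w.r.t. `rel`. -/
def IsShuffle {n : ℕ} (rel : Fin n → Fin n → Prop) (f : Fin n → List ℕ) (σ : List ℕ) : Prop :=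
  ∃ w : List (Fin n × ℕ),
    σ = w.map Prod.snd ∧
    (∀ i, (w.filter fun x => x.1 = i).map Prod.snd = f i) ∧
    ∀ a b : Fin w.length, rel (w.get a).1 (w.get b).1 → (a : ℕ) < (b : ℕ)

/-- Concatenation of a list of languages. -/
def ConcatLangs : List (Set (List ℕ)) → Set (List ℕ)
  | [] => {[]}
  | L :: Ls => { σ | ∃ u v, u ∈ L ∧ v ∈ ConcatLangs Ls ∧ σ = u ++ v }

/-- The language of a POWL 2.0 model. -/
def POWL.lang : POWL → Set (List ℕ)
  | .ptrans none => {[]}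
  | .ptrans (some a) => {[a]}
  | .po n rel ch => { σ | ∃ f : Fin n → List ℕ, (∀ i, f i ∈ (ch i).lang) ∧ IsShuffle rel f σ }
  | .cg n sE eE ed ch =>
      { σ | ∃ p, CGPath sE eE ed p ∧ σ ∈ ConcatLangs (p.map fun i => (ch i).lang) }

/-- Well-formedness of a POWL 2.0 model: partial-order nodes carry strict
partial orders over at least two children, choice-graph nodes carry valid
choice graphs over at least two children. -/
def POWL.WF : POWL → Prop
  | .ptrans _ => True
  | .po n rel ch => 2 ≤ n ∧ Irreflexive rel ∧ Transitive rel ∧ ∀ i, (ch i).WF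
  | .cg n sE eE ed ch => 2 ≤ n ∧ IsChoiceGraph sE eE ed ∧ ∀ i, (ch i).WF

/-! ### The conversion algorithm -/

/-- Transition-to-node reachability via the transitive closure of the flow. -/
def ttr (N : Net) (a b : ℕ) : Prop := Relation.TransGen (fun x y => (x, y) ∈ N.flow) a b

/-- The merge group of an XOR-split place p in popart. -/
def poSplitGroup (N : Net) (p : ℕ) : Finset ℕ :=
  N.transitions.filter fun t => ∃ t₁ ∈ N.post p, ∃ t₂ ∈ N.post p, ttr N t₁ t ∧ ¬ ttr N t₂ t

/-- The merge group of an XOR-join place p in popart. -/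
def poJoinGroup (N : Net) (p : ℕ) : Finset ℕ :=
  N.transitions.filter fun t => ∃ t₁ ∈ N.pre p, ∃ t₂ ∈ N.pre p, ttr N t t₁ ∧ ¬ ttr N t t₂

/-- Transitions related by some merge step of popart. -/
def popartRel (N : Net) (t t' : ℕ) : Prop :=
  ∃ p ∈ N.places,
    (1 < (N.post p).card ∧ t ∈ poSplitGroup N p ∧ t' ∈ poSplitGroup N p) ∨
    (1 < (N.pre p).card ∧ t ∈ poJoinGroup N p ∧ t' ∈ poJoinGroup N p)

/-- The part of popart(N) containing t: the equivalence class of t under the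
equivalence closure of all popart merge steps. -/
def popartClass (N : Net) (t : ℕ) : Finset ℕ :=
  N.transitions.filter fun t' => Relation.EqvGen (popartRel N) t t'

/-- `G` enumerates the partition popart(N). -/
def IsPopart (N : Net) {n : ℕ} (G : Fin n → Finset ℕ) : Prop :=
  (∀ i, ∃ t ∈ N.transitions, G i = popartClass N t) ∧
  (∀ t ∈ N.transitions, ∃ i, t ∈ G i) ∧
  Function.Injective G

/-- Forward restricted reachability: t is reachable from place p via a path avoiding t_stop. -/
def reachAvoid (N : Net) (tstop p t : ℕ) : Prop :=
  ∃ q, Relation.ReflTransGen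
        (fun a b => ∃ u, u ≠ tstop ∧ (a, u) ∈ N.flow ∧ (u, b) ∈ N.flow) p q ∧
    t ≠ tstop ∧ (q, t) ∈ N.flow

/-- Backward restricted reachability: place p is reachable from t via a path avoiding t_stop. -/
def backReachAvoid (N : Net) (tstop p t : ℕ) : Prop :=
  ∃ q, t ≠ tstop ∧ (t, q) ∈ N.flow ∧
    Relation.ReflTransGen
      (fun a b => ∃ u, u ≠ tstop ∧ (a, u) ∈ N.flow ∧ (u, b) ∈ N.flow) q p

/-- The merge group of an AND-split transition in cgpart. -/
def cgSplitGroup (N : Net) (ts : ℕ) : Finset ℕ :=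
  {ts} ∪ (N.transitions.filter fun t =>
    ∃ p₁ ∈ N.post ts, ∃ p₂ ∈ N.post ts, reachAvoid N ts p₁ t ∧ ¬ reachAvoid N ts p₂ t)

/-- The merge group of an AND-join transition in cgpart. -/
def cgJoinGroup (N : Net) (tj : ℕ) : Finset ℕ :=
  {tj} ∪ (N.transitions.filter fun t =>
    ∃ p₁ ∈ N.pre tj, ∃ p₂ ∈ N.pre tj, backReachAvoid N tj p₁ t ∧ ¬ backReachAvoid N tj p₂ t)

/-- Transitions related by some merge step of cgpart. -/
def cgpartRel (N : Net) (t t' : ℕ) : Prop :=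
  ∃ u ∈ N.transitions,
    (1 < (N.post u).card ∧ t ∈ cgSplitGroup N u ∧ t' ∈ cgSplitGroup N u) ∨
    (1 < (N.pre u).card ∧ t ∈ cgJoinGroup N u ∧ t' ∈ cgJoinGroup N u)

/-- The part of cgpart(N) containing t. -/
def cgpartClass (N : Net) (t : ℕ) : Finset ℕ :=
  N.transitions.filter fun t' => Relation.EqvGen (cgpartRel N) t t'

/-- `G` enumerates the partition cgpart(N). -/
def IsCgpart (N : Net) {n : ℕ} (G : Fin n → Finset ℕ) : Prop :=
  (∀ i, ∃ t ∈ N.transitions, G i = cgpartClass N t) ∧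
  (∀ t ∈ N.transitions, ∃ i, t ∈ G i) ∧
  Function.Injective G

/-- Isomorphism of labeled Petri nets. -/
def NetIso (N₁ N₂ : Net) : Prop :=
  ∃ fP fT : ℕ → ℕ,
    Set.BijOn fP ↑N₁.places ↑N₂.places ∧
    Set.BijOn fT ↑N₁.transitions ↑N₂.transitions ∧
    (∀ p ∈ N₁.places, ∀ t ∈ N₁.transitions,
      ((p, t) ∈ N₁.flow ↔ (fP p, fT t) ∈ N₂.flow) ∧
      ((t, p) ∈ N₁.flow ↔ (fT t, fP p) ∈ N₂.flow)) ∧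
    (∀ t ∈ N₁.transitions, N₁.label t = N₂.label (fT t))

/-- The partial-order decomposition step of the algorithm applies to N. -/
def PoStepApplies (N : Net) : Prop :=
  ∃ (n : ℕ) (G : Fin n → Finset ℕ),
    IsPopart N G ∧ 2 ≤ n ∧ ConflictHiding N G ∧ ∀ i, ¬ NetIso (poproject N (G i)) N

/-- `Converts N ψ`: the algorithm ConvertNetToPOWL converts the WF-net N into
the POWL model ψ without invoking the fall-through at any level of recursion. -/
inductive Converts : Net → POWL → Prop where
  | base (N : Net) (t : ℕ) :
      N.transitions = {t} → N.places = {N.source, N.sink} →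
      N.flow = {(N.source, t), (t, N.sink)} →
      Converts N (POWL.ptrans (N.label t))
  | poCase (N : Net) (n : ℕ) (G : Fin n → Finset ℕ) (ψ : Fin n → POWL) :
      IsPopart N G → 2 ≤ n → ConflictHiding N G →
      (∀ i, ¬ NetIso (poproject N (G i)) N) →
      (∀ i, Converts (poproject N (G i)) (ψ i)) →
      Converts N (POWL.po n (Relation.TransGen (execOrder N G)) ψ)
  | cgCase (N : Net) (n : ℕ) (G : Fin n → Finset ℕ) (ψ : Fin n → POWL) :
      ¬ PoStepApplies N →
      IsCgpart N G → 2 ≤ n → ConcurrencyHiding N G →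
      (∀ i, ¬ NetIso (cgproject N (G i)) N) →
      (∀ i, Converts (cgproject N (G i)) (ψ i)) →
      Converts N (POWL.cg n (cgStart N G) (cgEnd N G) (execOrder N G) ψ)

/-! ### Separable WF-nets -/

/-- The nets N and N' share no nodes. -/
def NodeDisjoint (N N' : Net) : Prop :=
  Disjoint (N.places ∪ N.transitions) (N'.places ∪ N'.transitions)

/-- The substitutive composition N_[t → N']. -/
def subst (N : Net) (t : ℕ) (N' : Net) : Net where
  places := N.places ∪ (N'.places \ {N'.source, N'.sink})
  transitions := (N.transitions \ {t}) ∪ N'.transitions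
  flow :=
    (N.flow.filter fun e => e.1 ≠ t ∧ e.2 ≠ t) ∪
    (N'.flow.filter fun e => e.1 ≠ N'.source ∧ e.2 ≠ N'.sink) ∪
    ((N.pre t) ×ˢ (N'.post N'.source)) ∪
    ((N'.pre N'.sink) ×ˢ (N.post t))
  label := fun x => if x ∈ N'.transitions then N'.label x else N.label x
  source := N.source
  sink := N.sink

/-- State machine: every transition has at most one input and one output place. -/
def IsStateMachine (N : Net) : Prop :=
  ∀ t ∈ N.transitions, (N.pre t).card ≤ 1 ∧ (N.post t).card ≤ 1

/-- Marked graph: every place has at most one input and one output transition. -/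
def IsMarkedGraph (N : Net) : Prop :=
  ∀ p ∈ N.places, (N.pre p).card ≤ 1 ∧ (N.post p).card ≤ 1

/-- The class of separable WF-nets. -/
inductive Separable : Net → Prop where
  | mg (N : Net) : N.IsWF → IsMarkedGraph N → Separable N
  | sm (N : Net) : N.IsWF → IsStateMachine N → Separable N
  | comp (N N' : Net) (t : ℕ) :
      Separable N → Separable N' → t ∈ N.transitions → NodeDisjoint N N' →
      Separable (subst N t N')

/-- Free-choice Petri net. -/
def FreeChoice (N : Net) : Prop :=
  ∀ t₁ ∈ N.transitions, ∀ t₂ ∈ N.transitions,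
    (N.pre t₁ ∩ N.pre t₂).Nonempty → N.pre t₁ = N.pre t₂

/-- A directed path in a Petri net: consecutive nodes are connected by the flow. -/
def DirPath (N : Net) (l : List ℕ) : Prop := l.Chain' fun a b => (a, b) ∈ N.flow

/-!
Suppose `m ⊏ k` through a place `p`, and some firing of `T_m` comes after the first firing `f`
of `T_k`. As entry points and exit points of a part are equivalent, `f` consumes `p` and a later
firing `x` of `T_m` produces `p`. The transitions of the parts reachable from `k` pass tokens
only among themselves, so their firings between `f` and `x` can be postponed: the remaining
firings are still enabled, they leave in `p` the token that `f` would have taken, and `x` then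
adds a second one, against safety. `T_m` is not among these parts since no part on a cycle of
the execution order ever fires.
-/

open Relation

namespace Net

variable {N : Net}

@[simp] lemma mem_pre {x y : ℕ} : x ∈ N.pre y ↔ (x, y) ∈ N.flow := by
  simp [pre]

@[simp] lemma mem_post {x y : ℕ} : y ∈ N.post x ↔ (x, y) ∈ N.flow := by
  simp [post]

lemma mem_entry {T' : Finset ℕ} {p : ℕ} :
    p ∈ N.entry T' ↔ p ∈ N.places ∧ (∃ t ∈ T', (p, t) ∈ N.flow) ∧
      (p = N.source ∨ ∃ u ∈ N.transitions, u ∉ T' ∧ (u, p) ∈ N.flow) := by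
  simp [entry, Finset.Nonempty, and_assoc, and_comm, and_left_comm]

lemma mem_exit {T' : Finset ℕ} {p : ℕ} :
    p ∈ N.exit T' ↔ p ∈ N.places ∧ (∃ t ∈ T', (t, p) ∈ N.flow) ∧
      (p = N.sink ∨ ∃ v ∈ N.transitions, v ∉ T' ∧ (p, v) ∈ N.flow) := by
  simp [exit, Finset.Nonempty, and_assoc, and_comm, and_left_comm]

def step (N : Net) (t : ℕ) (M : Marking) : Marking :=
  fun p => M p + (if p ∈ N.post t then 1 else 0) - (if p ∈ N.pre t then 1 else 0)

lemma fire_iff {t : ℕ} {M M' : Marking} : N.fire t M M' ↔ N.enabled t M ∧ M' = N.step t M := by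
  refine ⟨fun h => ⟨h.1, funext fun p => ?_⟩, fun ⟨h, hM'⟩ => ⟨h, fun p => ?_⟩⟩
  · have := h.2 p
    unfold step
    split_ifs at this ⊢ <;> omega
  · have := h.2 p
    subst hM'
    unfold step
    split_ifs at this ⊢ <;> simp_all

lemma one_le_of_fire_of_flow {t q : ℕ} {M M' : Marking} (h : N.fire t M M')
    (hq : (t, q) ∈ N.flow) : 1 ≤ M' q := by
  have hfire := h.2 q
  simp only [mem_pre, mem_post, hq, if_true] at hfire
  split_ifs at hfire with hpre
  · have := h.1.2 q (mem_pre.mpr hpre)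
    omega
  · omega

lemma firingSeq_nil {M M' : Marking} : N.firingSeq M [] M' ↔ M' = M := Iff.rfl

lemma firingSeq_cons {t : ℕ} {σ : List ℕ} {M M' : Marking} :
    N.firingSeq M (t :: σ) M' ↔ ∃ M₁, N.fire t M M₁ ∧ N.firingSeq M₁ σ M' := Iff.rfl

lemma firingSeq_singleton {t : ℕ} {M M' : Marking} : N.firingSeq M [t] M' ↔ N.fire t M M' := by
  simp [firingSeq_cons, firingSeq_nil]

lemma firingSeq_append {σ₁ σ₂ : List ℕ} {M M₂ : Marking} :
    N.firingSeq M (σ₁ ++ σ₂) M₂ ↔ ∃ M₁, N.firingSeq M σ₁ M₁ ∧ N.firingSeq M₁ σ₂ M₂ := by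
  induction σ₁ generalizing M with
  | nil => simp [firingSeq_nil]
  | cons t σ ih =>
    simp only [List.cons_append, firingSeq_cons, ih]
    exact ⟨fun ⟨M₁, h₁, M₂, h₂, h₃⟩ => ⟨M₂, ⟨M₁, h₁, h₂⟩, h₃⟩,
      fun ⟨M₂, ⟨M₁, h₁, h₂⟩, h₃⟩ => ⟨M₁, h₁, M₂, h₂, h₃⟩⟩

lemma eq_foldl_step_of_firingSeq {σ : List ℕ} {M M' : Marking} (h : N.firingSeq M σ M') :
    M' = σ.foldl (fun M t => N.step t M) M := by
  induction σ generalizing M with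
  | nil => exact h
  | cons t σ ih =>
    obtain ⟨M₁, hf, hs⟩ := h
    rw [(fire_iff.mp hf).2] at hs
    exact ih hs

lemma reachable_trans {M M' M'' : Marking} (h : N.reachable M M') (h' : N.reachable M' M'') :
    N.reachable M M'' :=
  let ⟨σ, hσ⟩ := h
  let ⟨σ', hσ'⟩ := h'
  ⟨σ ++ σ', firingSeq_append.mpr ⟨M', hσ, hσ'⟩⟩

lemma le_of_firingSeq_of_not_consumed {σ : List ℕ} {M M' : Marking} {q : ℕ}
    (h : N.firingSeq M σ M') (hq : ∀ t ∈ σ, (q, t) ∉ N.flow) : M q ≤ M' q := by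
  induction σ generalizing M with
  | nil => exact (congrFun h q).ge
  | cons t σ ih =>
    obtain ⟨M₁, hf, hs⟩ := h
    have := hf.2 q
    simp only [mem_pre, hq t List.mem_cons_self, if_false] at this
    exact le_trans (by omega) (ih hs fun u hu => hq u (List.mem_cons_of_mem t hu))

def IsFlowClosed (N : Net) (C : Set ℕ) : Prop :=
  ∀ u ∈ C, ∀ q, ∀ v ∈ N.transitions, (u, q) ∈ N.flow → (q, v) ∈ N.flow → v ∈ C

lemma firingSeq_filter_not_mem {C : Set ℕ} (hC : N.IsFlowClosed C)
    {σ : List ℕ} {M M' : Marking} (h : N.firingSeq M σ M') :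
    ∃ M'', N.firingSeq M (σ.filter (· ∉ C)) M'' ∧
      ∀ q, M'' q + σ.countP (fun t => t ∈ C ∧ (t, q) ∈ N.flow) =
        M' q + σ.countP (fun t => t ∈ C ∧ (q, t) ∈ N.flow) := by
  induction σ using List.reverseRecOn generalizing M' with
  | nil => exact ⟨M, rfl, fun q => by simp [congrFun h q]⟩
  | append_singleton σ t ih =>
    obtain ⟨M₁, hσ, ht⟩ := firingSeq_append.mp h
    rw [firingSeq_singleton] at ht
    obtain ⟨M'', hM'', hinv⟩ := ih hσ
    by_cases htC : t ∈ C
    · refine ⟨M'', by simpa [htC] using hM'', fun q => ?_⟩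
      have hfire := ht.2 q
      have := hinv q
      simp only [List.countP_append, List.countP_singleton, htC, true_and, decide_eq_true_eq]
      simp only [mem_pre, mem_post] at hfire
      split_ifs at hfire ⊢ <;> omega
    · have hen : N.enabled t M'' := by
        refine ⟨ht.1.1, fun q hq => ?_⟩
        have hprod : σ.countP (fun u => u ∈ C ∧ (u, q) ∈ N.flow) = 0 := by
          simp only [List.countP_eq_zero, decide_eq_true_eq, not_and]
          exact fun u _ huC huq => htC (hC u huC q t ht.1.1 huq (mem_pre.mp hq))
        have := hinv q
        have := ht.1.2 q hq
        omega
      refine ⟨N.step t M'', ?_, fun q => ?_⟩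
      · rw [List.filter_append, firingSeq_append]
        exact ⟨M'', hM'', by simpa [htC, firingSeq_singleton, fire_iff] using hen⟩
      · have h₁ := ht.2 q
        have h₂ := (fire_iff.mpr ⟨hen, rfl⟩).2 q
        have := hinv q
        simp only [List.countP_append, List.countP_singleton, htC, false_and, decide_false]
        omega

lemma exists_reachable_two_le_of_postpone {C : Set ℕ} (hC : N.IsFlowClosed C)
    {σ : List ℕ} {M M' : Marking} {p t : ℕ} (hσ : N.firingSeq M σ M') (hp : 1 ≤ M p)
    (hσp : ∀ u ∈ σ, u ∉ C → (p, u) ∉ N.flow) (ht : N.enabled t M') (htC : t ∉ C)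
    (htp : (t, p) ∈ N.flow) (hpt : (p, t) ∉ N.flow) :
    ∃ M₂, N.reachable M M₂ ∧ 2 ≤ M₂ p := by
  obtain ⟨M'', hM'', hinv⟩ := firingSeq_filter_not_mem hC hσ
  have hp'' : 1 ≤ M'' p := hp.trans <| le_of_firingSeq_of_not_consumed hM'' fun u hu =>
    hσp u (List.mem_of_mem_filter hu) (by simpa using (List.mem_filter.mp hu).2)
  have hen : N.enabled t M'' := by
    refine ⟨ht.1, fun q hq => ?_⟩
    have hprod : σ.countP (fun u => u ∈ C ∧ (u, q) ∈ N.flow) = 0 := by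
      simp only [List.countP_eq_zero, decide_eq_true_eq, not_and]
      exact fun u _ huC huq => htC (hC u huC q t ht.1 huq (mem_pre.mp hq))
    have := hinv q
    have := ht.2 q hq
    omega
  refine ⟨N.step t M'', ⟨σ.filter (· ∉ C) ++ [t], firingSeq_append.mpr ⟨M'', hM'', ?_⟩⟩, ?_⟩
  · exact firingSeq_singleton.mpr (fire_iff.mpr ⟨hen, rfl⟩)
  · have := (fire_iff.mpr ⟨hen, rfl⟩).2 p
    simp only [mem_pre, mem_post, htp, hpt, if_true, if_false] at this
    omega

def markingAt (N : Net) (M₀ : Marking) (σ : List ℕ) (k : ℕ) : Marking :=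
  (σ.take k).foldl (fun M t => N.step t M) M₀

section Run

variable {M₀ M₁ : Marking} {σ : List ℕ} (hσ : N.firingSeq M₀ σ M₁)
include hσ

lemma firingSeq_take (k : ℕ) : N.firingSeq M₀ (σ.take k) (N.markingAt M₀ σ k) := by
  rw [← List.take_append_drop k σ, firingSeq_append] at hσ
  obtain ⟨M, hM, -⟩ := hσ
  rwa [eq_foldl_step_of_firingSeq hM] at hM

lemma reachable_markingAt (k : ℕ) : N.reachable M₀ (N.markingAt M₀ σ k) :=
  ⟨_, firingSeq_take hσ k⟩

lemma markingAt_length : N.markingAt M₀ σ σ.length = M₁ := by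
  rw [markingAt, List.take_length, ← eq_foldl_step_of_firingSeq hσ]

lemma fire_getD {k : ℕ} (hk : k < σ.length) :
    N.fire (σ.getD k 0) (N.markingAt M₀ σ k) (N.markingAt M₀ σ (k + 1)) := by
  have h := firingSeq_take hσ (k + 1)
  rw [List.take_add_one, List.getElem?_eq_getElem hk, Option.toList_some,
    firingSeq_append] at h
  obtain ⟨M, hM, ht⟩ := h
  rw [eq_foldl_step_of_firingSeq hM, firingSeq_singleton] at ht
  rwa [List.getD_eq_getElem _ _ hk]

lemma firingSeq_segment {f x : ℕ} (hfx : f ≤ x) (hx : x ≤ σ.length) :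
    N.firingSeq (N.markingAt M₀ σ f) ((List.range' f (x - f)).map (σ.getD · 0))
      (N.markingAt M₀ σ x) := by
  induction x, hfx using Nat.le_induction with
  | base => simp [firingSeq_nil]
  | succ x hfx ih =>
    rw [show x + 1 - f = x - f + 1 by omega, List.range'_concat, List.map_append,
      firingSeq_append]
    refine ⟨_, ih (by omega), ?_⟩
    rw [show f + 1 * (x - f) = x by omega]
    exact firingSeq_singleton.mpr (fire_getD hσ (by omega))

lemma exists_producer_of_markingAt {q a b : ℕ} (hab : a ≤ b) (hb : b ≤ σ.length)
    (ha : N.markingAt M₀ σ a q = 0) (hb' : 1 ≤ N.markingAt M₀ σ b q) :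
    ∃ z, a ≤ z ∧ z < b ∧ (σ.getD z 0, q) ∈ N.flow := by
  induction b, hab using Nat.le_induction with
  | base => omega
  | succ b hab ih =>
    by_cases hq : 1 ≤ N.markingAt M₀ σ b q
    · obtain ⟨z, hz⟩ := ih (by omega) hq
      exact ⟨z, hz.1, by omega, hz.2.2⟩
    · have := (fire_getD hσ (by omega : b < σ.length)).2 q
      refine ⟨b, hab, by omega, mem_post.mp (by_contra fun h => ?_)⟩
      rw [if_neg h] at this
      split_ifs at this <;> omega

lemma exists_consumer_of_markingAt {q a b : ℕ} (hab : a ≤ b) (hb : b ≤ σ.length)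
    (ha : 1 ≤ N.markingAt M₀ σ a q) (hb' : N.markingAt M₀ σ b q = 0) :
    ∃ z, a ≤ z ∧ z < b ∧ (q, σ.getD z 0) ∈ N.flow := by
  induction b, hab using Nat.le_induction with
  | base => omega
  | succ b hab ih =>
    by_cases hq : N.markingAt M₀ σ b q = 0
    · obtain ⟨z, hz⟩ := ih (by omega) hq
      exact ⟨z, hz.1, by omega, hz.2.2⟩
    · have := (fire_getD hσ (by omega : b < σ.length)).2 q
      refine ⟨b, hab, by omega, mem_pre.mp (by_contra fun h => ?_)⟩
      rw [if_neg h] at this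
      split_ifs at this <;> omega

end Run

lemma IsPetri.mem_places_of_flow_to {q t : ℕ} (hN : N.IsPetri) (ht : t ∈ N.transitions)
    (h : (q, t) ∈ N.flow) : q ∈ N.places := by
  rcases hN.2 _ h with ⟨hq, -⟩ | ⟨-, ht'⟩
  exacts [hq, (Finset.disjoint_left.mp hN.1 ht' ht).elim]

lemma IsPetri.mem_places_of_flow_from {q t : ℕ} (hN : N.IsPetri) (ht : t ∈ N.transitions)
    (h : (t, q) ∈ N.flow) : q ∈ N.places := by
  rcases hN.2 _ h with ⟨hq, -⟩ | ⟨-, hq⟩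
  exacts [(Finset.disjoint_left.mp hN.1 hq ht).elim, hq]

lemma IsWF.not_flow_source (hN : N.IsWF) (z : ℕ) : (z, N.source) ∉ N.flow := fun h => by
  simpa [(hN.2.2.2.1 _ hN.2.1).mpr rfl] using mem_pre.mpr h

lemma IsWF.not_flow_sink (hN : N.IsWF) (z : ℕ) : (N.sink, z) ∉ N.flow := fun h => by
  simpa [(hN.2.2.2.2.1 _ hN.2.2.1).mpr rfl] using mem_post.mpr h

lemma IsWF.exists_flow_to (hN : N.IsWF) {t : ℕ} (ht : t ∈ N.transitions) :
    ∃ q, (q, t) ∈ N.flow := by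
  rcases (hN.2.2.2.2.2 t (Finset.mem_union_right _ ht)).1.cases_tail with h | ⟨q, -, hq⟩
  · exact (Finset.disjoint_left.mp hN.1.1 hN.2.1 (h ▸ ht)).elim
  · exact ⟨q, hq⟩

lemma IsWF.exists_flow_from (hN : N.IsWF) {t : ℕ} (ht : t ∈ N.transitions) :
    ∃ q, (t, q) ∈ N.flow := by
  rcases (hN.2.2.2.2.2 t (Finset.mem_union_right _ ht)).2.cases_head with h | ⟨q, hq, -⟩
  · exact (Finset.disjoint_left.mp hN.1.1 hN.2.2.1 (h ▸ ht)).elim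
  · exact ⟨q, hq⟩

lemma mem_entry_of_flow {T' : Finset ℕ} {u q v : ℕ} (hq : q ∈ N.places)
    (hu : u ∈ N.transitions) (huT : u ∉ T') (huq : (u, q) ∈ N.flow)
    (hv : v ∈ T') (hqv : (q, v) ∈ N.flow) : q ∈ N.entry T' :=
  mem_entry.mpr ⟨hq, ⟨v, hv, hqv⟩, Or.inr ⟨u, hu, huT, huq⟩⟩

lemma mem_exit_of_flow {T' : Finset ℕ} {u q v : ℕ} (hq : q ∈ N.places)
    (hu : u ∈ T') (huq : (u, q) ∈ N.flow)
    (hv : v ∈ N.transitions) (hvT : v ∉ T') (hqv : (q, v) ∈ N.flow) : q ∈ N.exit T' :=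
  mem_exit.mpr ⟨hq, ⟨u, hu, huq⟩, Or.inr ⟨v, hv, hvT, hqv⟩⟩

end Net

def coneTransitions (N : Net) {n : ℕ} (G : Fin n → Finset ℕ) (k : Fin n) : Set ℕ :=
  {t | ∃ P, t ∈ G P ∧ ReflTransGen (execOrder N G) k P}

namespace IsPartition

variable {N : Net} {n : ℕ} {G : Fin n → Finset ℕ} (hG : IsPartition N G)
include hG

lemma mem_transitions {t : ℕ} {P : Fin n} (h : t ∈ G P) : t ∈ N.transitions :=
  hG.2.2 ▸ Finset.mem_biUnion.mpr ⟨P, Finset.mem_univ P, h⟩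

lemma exists_mem {t : ℕ} (ht : t ∈ N.transitions) : ∃ P, t ∈ G P := by
  obtain ⟨P, -, hP⟩ := Finset.mem_biUnion.mp (hG.2.2 ▸ ht)
  exact ⟨P, hP⟩

lemma eq_of_mem {t : ℕ} {P Q : Fin n} (hP : t ∈ G P) (hQ : t ∈ G Q) : P = Q :=
  by_contra fun h => Finset.disjoint_left.mp (hG.2.1 P Q h) hP hQ

lemma execOrder_of_flow (hN : N.IsPetri) {u q v : ℕ} {P Q : Fin n} (hu : u ∈ G P)
    (hv : v ∈ G Q) (hPQ : P ≠ Q) (huq : (u, q) ∈ N.flow) (hqv : (q, v) ∈ N.flow) :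
    execOrder N G P Q := by
  have hq := hN.mem_places_of_flow_from (hG.mem_transitions hu) huq
  exact ⟨q, Finset.mem_inter.mpr
    ⟨N.mem_exit_of_flow hq hu huq (hG.mem_transitions hv) (fun h => hPQ (hG.eq_of_mem h hv)) hqv,
     N.mem_entry_of_flow hq (hG.mem_transitions hu) (fun h => hPQ (hG.eq_of_mem hu h)) huq hv hqv⟩⟩

lemma isFlowClosed_coneTransitions (hN : N.IsPetri) (k : Fin n) :
    N.IsFlowClosed (coneTransitions N G k) := by
  rintro u ⟨P, hu, hkP⟩ q v hv huq hqv
  obtain ⟨Q, hvQ⟩ := hG.exists_mem hv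
  by_cases hPQ : P = Q
  · exact ⟨Q, hvQ, hPQ ▸ hkP⟩
  · exact ⟨Q, hvQ, hkP.tail (hG.execOrder_of_flow hN hu hvQ hPQ huq hqv)⟩

end IsPartition

lemma exists_le_maximal_getD_mem {σ : List ℕ} {S : Finset ℕ} {a : ℕ} (ha : a < σ.length)
    (haS : σ.getD a 0 ∈ S) :
    ∃ l, a ≤ l ∧ Maximal (fun y => y < σ.length ∧ σ.getD y 0 ∈ S) l :=
  Set.Finite.exists_le_maximal ((Set.finite_lt_nat _).subset fun _ hy => hy.1) ⟨ha, haS⟩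

namespace ConflictHiding

open Net

variable {N : Net} {n : ℕ} {G : Fin n → Finset ℕ} {M₀ M₁ : Marking} {σ : List ℕ}
  (hch : ConflictHiding N G)
include hch

lemma mem_or_mem_of_flow_to {p u : ℕ} {m k : Fin n} (hm : p ∈ N.exit (G m))
    (hk : p ∈ N.entry (G k)) (hu : u ∈ N.transitions) (hup : (u, p) ∈ N.flow) :
    u ∈ G m ∨ u ∈ G k := by
  obtain ⟨P, hP⟩ := hch.1.exists_mem hu
  obtain ⟨hp, ⟨v, hv, hpv⟩, -⟩ := mem_entry.mp hk
  by_cases hPk : P = k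
  · exact .inr (hPk ▸ hP)
  refine .inl (hch.2.2.1 p P m ?_ hm ▸ hP)
  exact N.mem_exit_of_flow hp hP hup (hch.1.mem_transitions hv)
    (fun h => hPk (hch.1.eq_of_mem h hv)) hpv

lemma mem_or_mem_of_flow_from {p v : ℕ} {m k : Fin n} (hm : p ∈ N.exit (G m))
    (hk : p ∈ N.entry (G k)) (hv : v ∈ N.transitions) (hpv : (p, v) ∈ N.flow) :
    v ∈ G m ∨ v ∈ G k := by
  obtain ⟨P, hP⟩ := hch.1.exists_mem hv
  obtain ⟨hp, ⟨u, hu, hup⟩, -⟩ := mem_exit.mp hm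
  by_cases hPm : P = m
  · exact .inl (hPm ▸ hP)
  refine .inr (hch.2.1 p P k ?_ hk ▸ hP)
  exact N.mem_entry_of_flow hp (hch.1.mem_transitions hu)
    (fun h => hPm (hch.1.eq_of_mem h hu)) hup hP hpv

lemma flow_of_mem_entry {p p' t : ℕ} {k : Fin n} (hp : p ∈ N.entry (G k))
    (hp' : p' ∈ N.entry (G k)) (ht : t ∈ G k) (h : (p, t) ∈ N.flow) : (p', t) ∈ N.flow := by
  have := Finset.ext_iff.mp (hch.2.2.2.1 k p hp p' hp').2 t
  simp_all

lemma flow_of_mem_exit {p p' t : ℕ} {m : Fin n} (hp : p ∈ N.exit (G m))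
    (hp' : p' ∈ N.exit (G m)) (ht : t ∈ G m) (h : (t, p) ∈ N.flow) : (t, p') ∈ N.flow := by
  have := Finset.ext_iff.mp (hch.2.2.2.2 m p hp p' hp').1 t
  simp_all

/-- Otherwise `p` would be an exit point of both parts. -/
lemma not_produces_or_not_consumes {p : ℕ} {m k : Fin n} (hm : p ∈ N.exit (G m))
    (hk : p ∈ N.entry (G k)) (hmk : m ≠ k) :
    (∀ u ∈ G k, (u, p) ∉ N.flow) ∨ (∀ v ∈ G m, (p, v) ∉ N.flow) := by
  by_contra! ⟨⟨u, hu, hup⟩, ⟨v, hv, hpv⟩⟩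
  have hp := (mem_entry.mp hk).1
  exact hmk (hch.2.2.1 p m k hm (N.mem_exit_of_flow hp hu hup (hch.1.mem_transitions hv)
    (fun h => hmk (hch.1.eq_of_mem hv h)) hpv))

/-- If `T_m` consumes `p`, then `T_k` does not produce it, so `p` stays empty after `f` until
a `T_m` firing refills it. -/
lemma mem_of_flow_between (hsafe : N.Safe) (hσ : N.firingSeq N.initM σ M₁) {p : ℕ}
    {m k : Fin n} (hpX : p ∈ N.exit (G m)) (hpE : p ∈ N.entry (G k)) (hmk : m ≠ k)
    {f x : ℕ} (hf : f < σ.length) (hfk : σ.getD f 0 ∈ G k) (hpf : (p, σ.getD f 0) ∈ N.flow)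
    (hxmin : ∀ z, f < z → z < x → σ.getD z 0 ∈ G m → (σ.getD z 0, p) ∉ N.flow)
    {w : ℕ} (hfw : f ≤ w) (hwx : w ≤ x) (hw : w < σ.length) (hpw : (p, σ.getD w 0) ∈ N.flow) :
    σ.getD w 0 ∈ G k := by
  refine (hch.mem_or_mem_of_flow_from hpX hpE (fire_getD hσ hw).1.1 hpw).resolve_left
    fun hwm => ?_
  have hfw' : f < w := lt_of_le_of_ne hfw fun h => hmk (hch.1.eq_of_mem (h ▸ hwm) hfk)
  rcases hch.not_produces_or_not_consumes hpX hpE hmk with hR | hV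
  · have h0 : N.markingAt N.initM σ (f + 1) p = 0 := by
      have hfire := (fire_getD hσ hf).2 p
      have hsafe_f := hsafe _ (reachable_markingAt hσ f) p
      simp only [mem_pre, mem_post, hpf, hR _ hfk, if_true, if_false] at hfire
      omega
    obtain ⟨z, hfz, hzw, hzp⟩ := exists_producer_of_markingAt hσ hfw' hw.le h0
      ((fire_getD hσ hw).1.2 p (mem_pre.mpr hpw))
    rcases hch.mem_or_mem_of_flow_to hpX hpE (fire_getD hσ (hzw.trans hw)).1.1 hzp with h | h
    exacts [hxmin z hfz (by omega) h hzp, hR _ h hzp]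
  · exact hV _ hwm hpw

variable (hN : N.IsWF)
include hN

lemma flow_of_first_of_mem_entry (hσ : N.firingSeq N.initM σ M₁) {k : Fin n} {f : ℕ}
    (hf : Minimal (fun y => y < σ.length ∧ σ.getD y 0 ∈ G k) f) {p : ℕ}
    (hp : p ∈ N.entry (G k)) : (p, σ.getD f 0) ∈ N.flow := by
  have hfire := fire_getD hσ hf.prop.1
  obtain ⟨q, hq⟩ := hN.exists_flow_to hfire.1.1
  refine hch.flow_of_mem_entry ?_ hp hf.prop.2 hq
  refine mem_entry.mpr ⟨hN.1.mem_places_of_flow_to hfire.1.1 hq, ⟨_, hf.prop.2, hq⟩, ?_⟩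
  refine or_iff_not_imp_left.mpr fun hqs => ?_
  have h0 : N.markingAt N.initM σ 0 q = 0 := by simp [markingAt, initM, hqs]
  obtain ⟨z, -, hz, hzq⟩ := exists_producer_of_markingAt hσ (Nat.zero_le f) hf.prop.1.le h0
    (hfire.1.2 q (mem_pre.mpr hq))
  have hzσ : z < σ.length := hz.trans hf.prop.1
  exact ⟨_, (fire_getD hσ hzσ).1.1, fun h => hf.not_prop_of_lt hz ⟨hzσ, h⟩, hzq⟩

lemma flow_of_last_of_mem_exit (hσ : N.firingSeq M₀ σ N.finalM) {m : Fin n} {l : ℕ}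
    (hl : Maximal (fun y => y < σ.length ∧ σ.getD y 0 ∈ G m) l) {p : ℕ}
    (hp : p ∈ N.exit (G m)) : (σ.getD l 0, p) ∈ N.flow := by
  have hfire := fire_getD hσ hl.prop.1
  obtain ⟨q, hq⟩ := hN.exists_flow_from hfire.1.1
  refine hch.flow_of_mem_exit ?_ hp hl.prop.2 hq
  refine mem_exit.mpr ⟨hN.1.mem_places_of_flow_from hfire.1.1 hq, ⟨_, hl.prop.2, hq⟩, ?_⟩
  refine or_iff_not_imp_left.mpr fun hqs => ?_
  have h0 : N.markingAt M₀ σ σ.length q = 0 := by simp [markingAt_length hσ, finalM, hqs]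
  obtain ⟨z, hlz, hz, hqz⟩ := exists_consumer_of_markingAt hσ hl.prop.1 le_rfl
    (one_le_of_fire_of_flow hfire hq) h0
  exact ⟨_, (fire_getD hσ hz).1.1, fun h => hl.not_prop_of_gt hlz ⟨hz, h⟩, hqz⟩

/-- The earliest firing of a part on a cycle of the execution order would need a token
produced earlier by a part on the same cycle. -/
lemma getD_not_mem_of_cyclic (hσ : N.firingSeq N.initM σ M₁) {P : Fin n}
    (hP : TransGen (execOrder N G) P P) {y : ℕ} (hy : y < σ.length) : σ.getD y 0 ∉ G P := by
  induction y using Nat.strong_induction_on generalizing P with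
  | _ y ih =>
  intro hyP
  obtain ⟨P', hPP', ph, hph⟩ := TransGen.tail'_iff.mp hP
  obtain ⟨hphX, hphE⟩ := Finset.mem_inter.mp hph
  have hP' : TransGen (execOrder N G) P' P' := TransGen.head' ⟨ph, hph⟩ hPP'
  have hfirst : Minimal (fun z => z < σ.length ∧ σ.getD z 0 ∈ G P) y :=
    minimal_iff_forall_lt.mpr ⟨⟨hy, hyP⟩, fun z hz h => ih z hz hP h.1 h.2⟩
  have h1 := (fire_getD hσ hy).1.2 ph
    (mem_pre.mpr (hch.flow_of_first_of_mem_entry hN hσ hfirst hphE))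
  have h0 : N.markingAt N.initM σ 0 ph = 0 := by
    obtain ⟨-, ⟨u, -, hu⟩, -⟩ := mem_exit.mp hphX
    have hphs : ph ≠ N.source := fun h => hN.not_flow_source u (h ▸ hu)
    simp [markingAt, initM, hphs]
  obtain ⟨z, -, hz, hzph⟩ := exists_producer_of_markingAt hσ (Nat.zero_le y) hy.le h0 h1
  rcases hch.mem_or_mem_of_flow_to hphX hphE (fire_getD hσ (hz.trans hy)).1.1 hzph with h | h
  exacts [ih z hz hP' (hz.trans hy) h, ih z hz hP (hz.trans hy) h]

lemma exists_getD_mem_of_execOrder (hσ : N.firingSeq M₀ σ N.finalM) {m k : Fin n}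
    (hex : execOrder N G m k) {a : ℕ} (ha : a < σ.length) (ham : σ.getD a 0 ∈ G m) :
    ∃ b < σ.length, σ.getD b 0 ∈ G k := by
  obtain ⟨p, hp⟩ := hex
  obtain ⟨hpX, hpE⟩ := Finset.mem_inter.mp hp
  obtain ⟨l, -, hl⟩ := exists_le_maximal_getD_mem ha ham
  have hps : p ≠ N.sink := by
    obtain ⟨-, ⟨v, -, hv⟩, -⟩ := mem_entry.mp hpE
    exact fun h => hN.not_flow_sink v (h ▸ hv)
  have h0 : N.markingAt M₀ σ σ.length p = 0 := by simp [markingAt_length hσ, finalM, hps]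
  obtain ⟨c, hlc, hc, hpc⟩ := exists_consumer_of_markingAt hσ hl.prop.1 le_rfl
    (one_le_of_fire_of_flow (fire_getD hσ hl.prop.1) (hch.flow_of_last_of_mem_exit hN hσ hl hpX))
    h0
  rcases hch.mem_or_mem_of_flow_from hpX hpE (fire_getD hσ hc).1.1 hpc with h | h
  · exact absurd ⟨hc, h⟩ (hl.not_prop_of_gt hlc)
  · exact ⟨c, hc, h⟩

lemma exists_reachable_two_le_of_consumers_mem (hσ : N.firingSeq N.initM σ M₁) {p : ℕ}
    {m k : Fin n} (hex : execOrder N G m k) (hkk : ¬ TransGen (execOrder N G) k k) {f x : ℕ}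
    (hf : f < σ.length) (hpf : (p, σ.getD f 0) ∈ N.flow) (hfx : f < x) (hx : x < σ.length)
    (hxm : σ.getD x 0 ∈ G m) (hxp : (σ.getD x 0, p) ∈ N.flow)
    (hconsumer : ∀ w, f ≤ w → w ≤ x → w < σ.length → (p, σ.getD w 0) ∈ N.flow →
      σ.getD w 0 ∈ G k) :
    ∃ M, N.reachable N.initM M ∧ 2 ≤ M p := by
  have hmk : m ≠ k := by rintro rfl; exact hkk (.single hex)
  have hxC : σ.getD x 0 ∉ coneTransitions N G k := by
    rintro ⟨P, hxP, hkP⟩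
    exact hkk (TransGen.tail' (hch.1.eq_of_mem hxP hxm ▸ hkP) hex)
  have hseg : ∀ u ∈ (List.range' f (x - f)).map (σ.getD · 0),
      u ∉ coneTransitions N G k → (p, u) ∉ N.flow := by
    simp only [List.mem_map, List.mem_range'_1]
    rintro _ ⟨w, ⟨hfw, hwx⟩, rfl⟩ hwC hpw
    exact hwC ⟨k, hconsumer w hfw (by omega) (by omega) hpw, .refl⟩
  obtain ⟨M, hM, h2⟩ := exists_reachable_two_le_of_postpone
    (hch.1.isFlowClosed_coneTransitions hN.1 k) (firingSeq_segment hσ hfx.le hx.le)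
    ((fire_getD hσ hf).1.2 p (mem_pre.mpr hpf)) hseg (fire_getD hσ hx).1 hxC hxp
    fun hpx => hmk (hch.1.eq_of_mem hxm (hconsumer x hfx.le le_rfl hx hpx))
  exact ⟨M, reachable_trans (reachable_markingAt hσ f) hM, h2⟩

lemma lt_of_execOrder (hsafe : N.Safe) (hσ : N.firingSeq N.initM σ N.finalM) {m k : Fin n}
    (hex : execOrder N G m k) {a b : ℕ} (ha : a < σ.length) (hb : b < σ.length)
    (ham : σ.getD a 0 ∈ G m) (hbk : σ.getD b 0 ∈ G k) : a < b := by
  by_contra! hba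
  obtain ⟨p, hp⟩ := id hex
  obtain ⟨hpX, hpE⟩ := Finset.mem_inter.mp hp
  obtain ⟨f, hfb, hf⟩ := exists_minimal_le_of_wellFoundedLT
    (fun y => y < σ.length ∧ σ.getD y 0 ∈ G k) b ⟨hb, hbk⟩
  have hkk : ¬ TransGen (execOrder N G) k k := fun h =>
    hch.getD_not_mem_of_cyclic hN hσ h hf.prop.1 hf.prop.2
  have hmk : m ≠ k := by rintro rfl; exact hkk (.single hex)
  have hfa : f < a := lt_of_le_of_ne (hfb.trans hba) fun h =>
    hmk (hch.1.eq_of_mem ham (h ▸ hf.prop.2))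
  have hpf := hch.flow_of_first_of_mem_entry hN hσ hf hpE
  obtain ⟨l, hal, hl⟩ := exists_le_maximal_getD_mem ha ham
  obtain ⟨x, -, hx⟩ := exists_minimal_le_of_wellFoundedLT
    (fun y => f < y ∧ y < σ.length ∧ σ.getD y 0 ∈ G m ∧ (σ.getD y 0, p) ∈ N.flow) l
    ⟨hfa.trans_le hal, hl.prop.1, hl.prop.2, hch.flow_of_last_of_mem_exit hN hσ hl hpX⟩
  obtain ⟨hfx, hxσ, hxm, hxp⟩ := hx.prop
  have hconsumer : ∀ w, f ≤ w → w ≤ x → w < σ.length → (p, σ.getD w 0) ∈ N.flow →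
      σ.getD w 0 ∈ G k := fun w =>
    hch.mem_of_flow_between hsafe hσ hpX hpE hmk hf.prop.1 hf.prop.2 hpf
      fun z hfz hzx hzm hzp => hx.not_prop_of_lt hzx ⟨hfz, by omega, hzm, hzp⟩
  obtain ⟨M, hM, h2⟩ := hch.exists_reachable_two_le_of_consumers_mem hN hσ hex hkk hf.prop.1
    hpf hfx hxσ hxm hxp hconsumer
  have := hsafe M hM p
  omega

end ConflictHiding

theorem execOrder_respected_by_firing_sequences_general
    (N : Net) (hWF : N.IsWF) (hsafe : N.Safe)
    {n : ℕ} (G : Fin n → Finset ℕ) (hch : ConflictHiding N G)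
    (i j : Fin n) (hij : Relation.TransGen (execOrder N G) i j)
    (σ : List ℕ) (hσ : N.firingSeq N.initM σ N.finalM) :
    ∀ (a b : ℕ) (ha : a < σ.length) (hb : b < σ.length),
      σ.get ⟨a, ha⟩ ∈ G i → σ.get ⟨b, hb⟩ ∈ G j → a < b := by
  intro a b ha hb hai hbj
  rw [List.get_eq_getElem, ← List.getD_eq_getElem _ 0] at hai hbj
  induction hij using Relation.TransGen.head_induction_on generalizing a with
  | single hex => exact hch.lt_of_execOrder hWF hsafe hσ hex ha hb hai hbj
  | head hex _ ih =>
    obtain ⟨c, hc, hck⟩ := hch.exists_getD_mem_of_execOrder hWF hσ hex ha hai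
    exact (hch.lt_of_execOrder hWF hsafe hσ hex ha hc hai hck).trans (ih c hc hck)

/-- For a conflict-hiding partition of a safe and sound
WF-net: if i ⊏ j in the transitive closure of order(N,G), then in every firing
sequence from [source] to [sink], every firing of a transition of T_i occurs
before every firing of a transition of T_j. -/
theorem execOrder_respected_by_firing_sequences
    (N : Net) (hWF : N.IsWF) (hsafe : N.Safe) (hsound : N.Sound)
    {n : ℕ} (G : Fin n → Finset ℕ) (hch : ConflictHiding N G)
    (i j : Fin n) (hij : Relation.TransGen (execOrder N G) i j)
    (σ : List ℕ) (hσ : N.firingSeq N.initM σ N.finalM) :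
    ∀ (a b : ℕ) (ha : a < σ.length) (hb : b < σ.length),
      σ.get ⟨a, ha⟩ ∈ G i → σ.get ⟨b, hb⟩ ∈ G j → a < b :=
  execOrder_respected_by_firing_sequences_general N hWF hsafe G hch i j hij σ hσ

end
end

section
/- For every POWL 2.0 model ψ, there exists a safe and sound separable WF-net N such that L(N) = L(ψ). -/
/-!
Common formalization of Petri nets, workflow nets (WF-nets), POWL 2.0 models,
and the WF-net-to-POWL conversion algorithm.
-/

noncomputable section
attribute [local instance] Classical.propDecidable

/-!
Every POWL model is recognised by a finite automaton with silent moves, a unique initial state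
without incoming moves and a unique final state without outgoing ones: a transition is a single
move, a choice graph chains copies of the children's automata along the edges of the graph, and
a partial order runs the children's automata side by side, a child moving only once all of its
predecessors have reached their final states. Restricted to the moves that lie on accepting runs,
such an automaton is a state machine WF-net whose places are its states; marked with a single
token it is safe, sound, and has the automaton's language, and state machines are separable by
definition.
-/

structure Automaton (α : Type*) where
  step : α → Option ℕ → α → Prop
  start : α
  accept : α

namespace Automaton

variable {α : Type*} (A : Automaton α)

def edges : Set (α × Option ℕ × α) := {e | A.step e.1 e.2.1 e.2.2}

def labels : Set (Option ℕ) := {l | ∃ a b, A.step a l b}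

inductive Path (A : Automaton α) : α → List ℕ → α → Prop
  | refl (a : α) : Path A a [] a
  | cons {a b c : α} {l : Option ℕ} {w : List ℕ} :
      A.step a l b → Path A b w c → Path A a (l.toList ++ w) c

def Reach (a b : α) : Prop := ∃ w, A.Path a w b

def lang : Set (List ℕ) := {w | A.Path A.start w A.accept}

structure IsWorkflow : Prop where
  finite_edges : A.edges.Finite
  not_step_start : ∀ a l, ¬ A.step a l A.start
  not_step_accept : ∀ l b, ¬ A.step A.accept l b
  lang_nonempty : A.lang.Nonempty

def trim : Automaton α where
  step a l b := A.step a l b ∧ A.Reach A.start a ∧ A.Reach b A.accept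
  start := A.start
  accept := A.accept

def Useful (q : α) : Prop := A.Reach A.start q ∧ A.Reach q A.accept

def trimEdges (hA : A.edges.Finite) : Finset (α × Option ℕ × α) :=
  (hA.subset fun _ he => he.1 : A.trim.edges.Finite).toFinset

variable {A}

theorem finite_labels (h : A.edges.Finite) : A.labels.Finite :=
  (h.image fun e => e.2.1).subset fun l ⟨a, b, hab⟩ => ⟨(a, l, b), hab, rfl⟩

theorem finite_edges_of_labels [Finite α] (h : A.labels.Finite) : A.edges.Finite :=
  (Set.finite_univ.prod (h.prod Set.finite_univ)).subset fun _ he =>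
    ⟨trivial, ⟨_, _, he⟩, trivial⟩

namespace Path

theorem single {a b : α} {l : Option ℕ} (h : A.step a l b) : A.Path a l.toList b := by
  simpa using Path.cons h (.refl b)

theorem append {a b c : α} {u v : List ℕ} (h₁ : A.Path a u b) (h₂ : A.Path b v c) :
    A.Path a (u ++ v) c := by
  induction h₁ with
  | refl => exact h₂
  | cons hs _ ih => simpa using Path.cons hs (ih h₂)

theorem exists_of_append {a c : α} {u v : List ℕ} (h : A.Path a (u ++ v) c) :
    ∃ b, A.Path a u b ∧ A.Path b v c := by
  generalize hw : u ++ v = w at h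
  induction h generalizing u with
  | refl a =>
    obtain ⟨rfl, rfl⟩ := List.append_eq_nil_iff.1 hw
    exact ⟨a, .refl a, .refl a⟩
  | @cons a b c l w hs hp ih =>
    rcases u with _ | ⟨x, u⟩
    · exact ⟨a, .refl a, by simpa [← hw] using Path.cons hs hp⟩
    rcases l with _ | y
    · obtain ⟨m, hm, hmc⟩ := ih (u := x :: u) (by simpa using hw)
      exact ⟨m, by simpa using Path.cons hs hm, hmc⟩
    · have hw' : x :: (u ++ v) = y :: w := by simpa using hw
      obtain ⟨rfl, hrest⟩ := List.cons_eq_cons.1 hw'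
      obtain ⟨m, hm, hmc⟩ := ih hrest
      exact ⟨m, by simpa using Path.cons hs hm, hmc⟩

theorem eq_nil_of_forall_not_step {a c : α} {w : List ℕ} (hA : ∀ l b, ¬ A.step a l b)
    (h : A.Path a w c) : w = [] ∧ c = a := by
  cases h with
  | refl => exact ⟨rfl, rfl⟩
  | cons hs _ => exact absurd hs (hA _ _)

theorem exists_step_into {a b : α} {w : List ℕ} (h : A.Path a w b) (hab : a ≠ b) :
    ∃ c l, A.step c l b := by
  induction h with
  | refl => exact absurd rfl hab
  | @cons a b' c l w hs _ ih =>
    by_cases hb : b' = c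
    · exact ⟨a, l, hb ▸ hs⟩
    · exact ih hb

theorem exists_step_from {a b : α} {w : List ℕ} (h : A.Path a w b) (hab : a ≠ b) :
    ∃ l c, A.step a l c := by
  cases h with
  | refl => exact absurd rfl hab
  | cons hs _ => exact ⟨_, _, hs⟩

end Path

theorem Reach.refl (a : α) : A.Reach a a := ⟨[], .refl a⟩

theorem Reach.trans {a b c : α} (h₁ : A.Reach a b) (h₂ : A.Reach b c) : A.Reach a c :=
  let ⟨_, hu⟩ := h₁; let ⟨_, hv⟩ := h₂; ⟨_, hu.append hv⟩

theorem Reach.of_step {a b : α} {l : Option ℕ} (h : A.step a l b) : A.Reach a b :=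
  ⟨_, .single h⟩

theorem Path.of_trim {a b : α} {w : List ℕ} (h : A.trim.Path a w b) : A.Path a w b := by
  induction h with
  | refl => exact .refl _
  | cons hs _ ih => exact .cons hs.1 ih

theorem Path.trim {a b : α} {w : List ℕ} (h : A.Path a w b) (ha : A.Reach A.start a)
    (hb : A.Reach b A.accept) : A.trim.Path a w b := by
  induction h with
  | refl => exact .refl _
  | @cons a b' c l w hs hp ih =>
    exact .cons ⟨hs, ha, Reach.trans ⟨w, hp⟩ hb⟩ (ih (ha.trans (.of_step hs)) hb)

theorem lang_trim : A.trim.lang = A.lang :=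
  Set.ext fun _ => ⟨Path.of_trim, fun h => h.trim (.refl _) (.refl _)⟩

theorem useful_of_trim_step {a b : α} {l : Option ℕ} (h : A.trim.step a l b) :
    A.Useful a ∧ A.Useful b :=
  ⟨⟨h.2.1, (Reach.of_step h.1).trans h.2.2⟩, ⟨h.2.1.trans (.of_step h.1), h.2.2⟩⟩

theorem Useful.of_trim_path {a b : α} {w : List ℕ} (ha : A.Useful a) (h : A.trim.Path a w b) :
    A.Useful b := by
  induction h with
  | refl => exact ha
  | cons hs _ ih => exact ih (useful_of_trim_step hs).2

theorem Useful.exists_trim_paths {q : α} (hq : A.Useful q) :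
    ∃ u v, A.trim.Path A.start u q ∧ A.trim.Path q v A.accept :=
  let ⟨⟨u, hu⟩, ⟨v, hv⟩⟩ := hq
  ⟨u, v, hu.trim (.refl _) hq.2, hv.trim hq.1 (.refl _)⟩

theorem IsWorkflow.useful_start (hA : A.IsWorkflow) : A.Useful A.start :=
  ⟨.refl _, hA.lang_nonempty⟩

theorem IsWorkflow.useful_accept (hA : A.IsWorkflow) : A.Useful A.accept :=
  ⟨hA.lang_nonempty, .refl _⟩

theorem mem_trimEdges {hA : A.edges.Finite} {e : α × Option ℕ × α} :
    e ∈ A.trimEdges hA ↔ A.trim.step e.1 e.2.1 e.2.2 :=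
  Set.Finite.mem_toFinset _

end Automaton

theorem List.filterMap_cons_eq_toList_append {β γ : Type*} (f : β → Option γ) (b : β)
    (l : List β) : (b :: l).filterMap f = (f b).toList ++ l.filterMap f := by
  cases h : f b <;> simp [h]

theorem Net.mem_pre_s17 {N : Net} {x y : ℕ} : y ∈ N.pre x ↔ (y, x) ∈ N.flow := by
  simp [Net.pre]

theorem Net.mem_post_s17 {N : Net} {x y : ℕ} : y ∈ N.post x ↔ (x, y) ∈ N.flow := by
  simp [Net.post]

namespace Automaton

open Encodable

variable {α : Type*} [Encodable α]

/-- Places get even numbers and transitions odd ones, so that the two never collide. -/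
def placeOf (q : α) : ℕ := 2 * encode q

def transOf (e : α × Option ℕ × α) : ℕ := 2 * encode e + 1

theorem placeOf_injective : Function.Injective (placeOf (α := α)) := fun a b h =>
  encode_injective (by unfold placeOf at h; omega)

theorem transOf_injective : Function.Injective (transOf (α := α)) := fun a b h =>
  encode_injective (by unfold transOf at h; omega)

theorem placeOf_ne_transOf (q : α) (e : α × Option ℕ × α) : placeOf q ≠ transOf e := by
  unfold placeOf transOf; omega

def mark (q : α) : Marking := fun p => if p = placeOf q then 1 else 0

theorem mark_injective : Function.Injective (mark (α := α)) := fun a b h => by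
  by_contra hab
  have := congrFun h (placeOf a)
  simp [mark, placeOf_injective.ne hab] at this

variable [Fintype α] (A : Automaton α) (hA : A.edges.Finite)

def toNet : Net where
  places := (Finset.univ.filter A.Useful).image placeOf
  transitions := (A.trimEdges hA).image transOf
  flow := (A.trimEdges hA).biUnion fun e => {(placeOf e.1, transOf e), (transOf e, placeOf e.2.2)}
  label x := (decode (α := α × Option ℕ × α) (x / 2)).bind fun e => e.2.1
  source := placeOf A.start
  sink := placeOf A.accept

variable {A hA}

theorem mem_places_toNet {p : ℕ} :
    p ∈ (A.toNet hA).places ↔ ∃ q, A.Useful q ∧ p = placeOf q := by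
  simp [toNet, eq_comm]

theorem mem_transitions_toNet {t : ℕ} :
    t ∈ (A.toNet hA).transitions ↔ ∃ a l b, A.trim.step a l b ∧ t = transOf (a, l, b) := by
  simp [toNet, mem_trimEdges, eq_comm]

theorem mem_flow_toNet {u v : ℕ} : (u, v) ∈ (A.toNet hA).flow ↔
    ∃ a l b, A.trim.step a l b ∧ ((u = placeOf a ∧ v = transOf (a, l, b)) ∨
      (u = transOf (a, l, b) ∧ v = placeOf b)) := by
  simp [toNet, mem_trimEdges]

theorem label_transOf (e : α × Option ℕ × α) : (A.toNet hA).label (transOf e) = e.2.1 := by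
  show (decode ((2 * encode e + 1) / 2)).bind _ = _
  rw [show (2 * encode e + 1) / 2 = encode e by omega, encodek]
  rfl

theorem pre_transOf {a b : α} {l : Option ℕ} (h : A.trim.step a l b) :
    (A.toNet hA).pre (transOf (a, l, b)) = {placeOf a} := by
  ext y
  simp only [Net.mem_pre_s17, mem_flow_toNet, Finset.mem_singleton]
  constructor
  · rintro ⟨a', l', b', -, ⟨rfl, he⟩ | ⟨-, he⟩⟩
    · cases transOf_injective he; rfl
    · exact absurd he.symm (placeOf_ne_transOf _ _)
  · rintro rfl
    exact ⟨a, l, b, h, .inl ⟨rfl, rfl⟩⟩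

theorem post_transOf {a b : α} {l : Option ℕ} (h : A.trim.step a l b) :
    (A.toNet hA).post (transOf (a, l, b)) = {placeOf b} := by
  ext y
  simp only [Net.mem_post_s17, mem_flow_toNet, Finset.mem_singleton]
  constructor
  · rintro ⟨a', l', b', -, ⟨he, -⟩ | ⟨he, rfl⟩⟩
    · exact absurd he (placeOf_ne_transOf _ _).symm
    · cases transOf_injective he; rfl
  · rintro rfl
    exact ⟨a, l, b, h, .inr ⟨rfl, rfl⟩⟩

theorem fire_mark_iff {q : α} {t : ℕ} {M : Marking} : (A.toNet hA).fire t (mark q) M ↔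
    ∃ l b, A.trim.step q l b ∧ t = transOf (q, l, b) ∧ M = mark b := by
  constructor
  · rintro ⟨⟨ht, hen⟩, hM⟩
    obtain ⟨a, l, b, h, rfl⟩ := mem_transitions_toNet.1 ht
    have hq : a = q := by
      by_contra haq
      have := hen (placeOf a) (by simp [pre_transOf h])
      simp [mark, placeOf_injective.ne haq] at this
    subst hq
    refine ⟨l, b, h, rfl, funext fun p => ?_⟩
    have := hM p
    simp only [pre_transOf h, post_transOf h, Finset.mem_singleton, mark] at this ⊢
    split_ifs at this ⊢ <;> omega
  · rintro ⟨l, b, h, rfl, rfl⟩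
    refine ⟨⟨mem_transitions_toNet.2 ⟨q, l, b, h, rfl⟩, fun p hp => ?_⟩, fun p => ?_⟩
    · simp_all [pre_transOf h, mark]
    · simp only [pre_transOf h, post_transOf h, Finset.mem_singleton, mark]
      split_ifs <;> omega

theorem exists_trim_path_of_firingSeq {q : α} {σ : List ℕ} {M : Marking}
    (h : (A.toNet hA).firingSeq (mark q) σ M) :
    ∃ b, M = mark b ∧ A.trim.Path q (σ.filterMap (A.toNet hA).label) b := by
  induction σ generalizing q with
  | nil => exact ⟨q, h, .refl q⟩
  | cons t σ ih =>
    obtain ⟨M₁, hfire, hσ⟩ := h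
    obtain ⟨l, b, hs, rfl, rfl⟩ := fire_mark_iff.1 hfire
    obtain ⟨c, rfl, hp⟩ := ih hσ
    exact ⟨c, rfl, by rw [List.filterMap_cons_eq_toList_append, label_transOf]; exact .cons hs hp⟩

theorem Path.exists_firingSeq {a b : α} {w : List ℕ} (h : A.trim.Path a w b) :
    ∃ σ, (A.toNet hA).firingSeq (mark a) σ (mark b) ∧
      σ.filterMap (A.toNet hA).label = w := by
  induction h with
  | refl => exact ⟨[], rfl, rfl⟩
  | @cons a b c l w hs _ ih =>
    obtain ⟨σ, hσ, rfl⟩ := ih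
    exact ⟨transOf (a, l, b) :: σ, ⟨mark b, fire_mark_iff.2 ⟨l, b, hs, rfl, rfl⟩, hσ⟩,
      by rw [List.filterMap_cons_eq_toList_append, label_transOf]⟩

theorem Path.pathRel_toNet {a b : α} {w : List ℕ} (h : A.trim.Path a w b) :
    (A.toNet hA).pathRel (placeOf a) (placeOf b) := by
  induction h with
  | refl => exact .refl
  | @cons a b c l w hs _ ih =>
    exact .head (mem_flow_toNet.2 ⟨a, l, b, hs, .inl ⟨rfl, rfl⟩⟩)
      (.head (mem_flow_toNet.2 ⟨a, l, b, hs, .inr ⟨rfl, rfl⟩⟩) ih)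

theorem reachable_toNet_iff {M : Marking} :
    (A.toNet hA).reachable (A.toNet hA).initM M ↔
      ∃ q, A.trim.Reach A.start q ∧ M = mark q := by
  constructor
  · rintro ⟨σ, hσ⟩
    obtain ⟨q, rfl, hp⟩ := exists_trim_path_of_firingSeq hσ
    exact ⟨q, ⟨_, hp⟩, rfl⟩
  · rintro ⟨q, ⟨w, hw⟩, rfl⟩
    obtain ⟨σ, hσ, -⟩ := hw.exists_firingSeq (hA := hA)
    exact ⟨σ, hσ⟩

theorem isPetri_toNet (hA : A.edges.Finite) : (A.toNet hA).IsPetri := by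
  refine ⟨Finset.disjoint_left.2 fun x hp ht => ?_, fun ⟨u, v⟩ hf => ?_⟩
  · obtain ⟨q, -, rfl⟩ := mem_places_toNet.1 hp
    obtain ⟨a, l, b, -, he⟩ := mem_transitions_toNet.1 ht
    exact placeOf_ne_transOf _ _ he
  · obtain ⟨a, l, b, hs, ⟨rfl, rfl⟩ | ⟨rfl, rfl⟩⟩ := mem_flow_toNet.1 hf
    · exact .inl ⟨mem_places_toNet.2 ⟨a, (useful_of_trim_step hs).1, rfl⟩,
        mem_transitions_toNet.2 ⟨a, l, b, hs, rfl⟩⟩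
    · exact .inr ⟨mem_transitions_toNet.2 ⟨a, l, b, hs, rfl⟩,
        mem_places_toNet.2 ⟨b, (useful_of_trim_step hs).2, rfl⟩⟩

theorem pre_placeOf_eq_empty_iff (hstart : ∀ a l, ¬ A.step a l A.start) {q : α}
    (hq : A.Useful q) : (A.toNet hA).pre (placeOf q) = ∅ ↔ q = A.start := by
  rw [Finset.eq_empty_iff_forall_notMem]
  constructor
  · intro hpre
    by_contra hne
    obtain ⟨u, -, hu, -⟩ := hq.exists_trim_paths
    obtain ⟨c, l, hs⟩ := hu.exists_step_into (Ne.symm hne)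
    exact hpre _ (Net.mem_pre_s17.2 (mem_flow_toNet.2 ⟨c, l, q, hs, .inr ⟨rfl, rfl⟩⟩))
  · rintro rfl y hy
    obtain ⟨a, l, b, hs, ⟨-, he⟩ | ⟨-, he⟩⟩ := mem_flow_toNet.1 (Net.mem_pre_s17.1 hy)
    · exact placeOf_ne_transOf _ _ he
    · exact hstart a l (placeOf_injective he.symm ▸ hs.1)

theorem post_placeOf_eq_empty_iff (haccept : ∀ l b, ¬ A.step A.accept l b) {q : α}
    (hq : A.Useful q) : (A.toNet hA).post (placeOf q) = ∅ ↔ q = A.accept := by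
  rw [Finset.eq_empty_iff_forall_notMem]
  constructor
  · intro hpost
    by_contra hne
    obtain ⟨-, v, -, hv⟩ := hq.exists_trim_paths
    obtain ⟨l, c, hs⟩ := hv.exists_step_from hne
    exact hpost _ (Net.mem_post_s17.2 (mem_flow_toNet.2 ⟨q, l, c, hs, .inl ⟨rfl, rfl⟩⟩))
  · rintro rfl y hy
    obtain ⟨a, l, b, hs, ⟨he, -⟩ | ⟨he, -⟩⟩ := mem_flow_toNet.1 (Net.mem_post_s17.1 hy)
    · exact haccept l b (placeOf_injective he.symm ▸ hs.1)
    · exact placeOf_ne_transOf _ _ he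

theorem pathRel_toNet_of_mem {x : ℕ}
    (hx : x ∈ (A.toNet hA).places ∪ (A.toNet hA).transitions) :
    (A.toNet hA).pathRel (A.toNet hA).source x ∧ (A.toNet hA).pathRel x (A.toNet hA).sink := by
  rcases Finset.mem_union.1 hx with hp | ht
  · obtain ⟨q, hq, rfl⟩ := mem_places_toNet.1 hp
    obtain ⟨u, v, hu, hv⟩ := hq.exists_trim_paths
    exact ⟨hu.pathRel_toNet, hv.pathRel_toNet⟩
  · obtain ⟨a, l, b, hs, rfl⟩ := mem_transitions_toNet.1 ht
    obtain ⟨u, -, hu, -⟩ := (useful_of_trim_step hs).1.exists_trim_paths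
    obtain ⟨-, v, -, hv⟩ := (useful_of_trim_step hs).2.exists_trim_paths
    exact ⟨hu.pathRel_toNet.tail (mem_flow_toNet.2 ⟨a, l, b, hs, .inl ⟨rfl, rfl⟩⟩),
      .head (mem_flow_toNet.2 ⟨a, l, b, hs, .inr ⟨rfl, rfl⟩⟩) hv.pathRel_toNet⟩

theorem IsWorkflow.isWF_toNet (hA : A.IsWorkflow) : (A.toNet hA.finite_edges).IsWF := by
  refine ⟨isPetri_toNet _, mem_places_toNet.2 ⟨_, hA.useful_start, rfl⟩,
    mem_places_toNet.2 ⟨_, hA.useful_accept, rfl⟩, fun p hp => ?_, fun p hp => ?_,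
    fun x hx => pathRel_toNet_of_mem hx⟩
  all_goals obtain ⟨q, hq, rfl⟩ := mem_places_toNet.1 hp
  · exact (pre_placeOf_eq_empty_iff hA.not_step_start hq).trans placeOf_injective.eq_iff.symm
  · exact (post_placeOf_eq_empty_iff hA.not_step_accept hq).trans placeOf_injective.eq_iff.symm

theorem isStateMachine_toNet (hA : A.edges.Finite) : IsStateMachine (A.toNet hA) := by
  intro t ht
  obtain ⟨a, l, b, hs, rfl⟩ := mem_transitions_toNet.1 ht
  simp [pre_transOf hs, post_transOf hs]

theorem safe_toNet (hA : A.edges.Finite) : (A.toNet hA).Safe := by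
  intro M hM p
  obtain ⟨q, -, rfl⟩ := reachable_toNet_iff.1 hM
  unfold mark
  split <;> omega

theorem IsWorkflow.sound_toNet (hA : A.IsWorkflow) : (A.toNet hA.finite_edges).Sound := by
  have useful_of_reachable {M : Marking} (hM : (A.toNet hA.finite_edges).reachable
      (A.toNet hA.finite_edges).initM M) : ∃ q, A.Useful q ∧ M = mark q := by
    obtain ⟨q, ⟨w, hw⟩, rfl⟩ := reachable_toNet_iff.1 hM
    exact ⟨q, hA.useful_start.of_trim_path hw, rfl⟩
  refine ⟨fun t ht => ?_, fun M hM => ?_, fun M hM hsink => ?_⟩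
  · obtain ⟨a, l, b, hs, rfl⟩ := mem_transitions_toNet.1 ht
    obtain ⟨u, -, hu, -⟩ := (useful_of_trim_step hs).1.exists_trim_paths
    exact ⟨mark a, reachable_toNet_iff.2 ⟨a, ⟨u, hu⟩, rfl⟩,
      (fire_mark_iff.2 ⟨l, b, hs, rfl, rfl⟩).1⟩
  · obtain ⟨q, hq, rfl⟩ := useful_of_reachable hM
    obtain ⟨-, v, -, hv⟩ := hq.exists_trim_paths
    obtain ⟨σ, hσ, -⟩ := hv.exists_firingSeq (hA := hA.finite_edges)
    exact ⟨σ, hσ⟩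
  · obtain ⟨q, -, rfl⟩ := useful_of_reachable hM
    by_contra hne
    have hqa : placeOf A.accept ≠ placeOf q := fun h => hne (by rw [← placeOf_injective h]; rfl)
    simp [toNet, mark, hqa] at hsink

theorem lang_toNet (hA : A.edges.Finite) : (A.toNet hA).lang = A.lang := by
  rw [← lang_trim]
  ext w
  constructor
  · rintro ⟨σ, hσ, rfl⟩
    obtain ⟨b, hb, hp⟩ := exists_trim_path_of_firingSeq hσ
    obtain rfl : A.accept = b := mark_injective hb
    exact hp
  · intro hw
    obtain ⟨σ, hσ, hl⟩ := Path.exists_firingSeq (hA := hA) hw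
    exact ⟨σ, hσ, hl.symm⟩

def single (l : Option ℕ) : Automaton Bool where
  step a l' b := a = false ∧ l' = l ∧ b = true
  start := false
  accept := true

theorem lang_single (l : Option ℕ) : (single l).lang = {l.toList} := by
  ext w
  constructor
  · rintro (_ | ⟨⟨-, rfl, rfl⟩, hp⟩)
    obtain ⟨rfl, -⟩ := hp.eq_nil_of_forall_not_step (by simp [single])
    simp
  · rintro rfl
    exact .single ⟨rfl, rfl, rfl⟩

theorem isWorkflow_single (l : Option ℕ) : (single l).IsWorkflow where
  finite_edges := (Set.finite_singleton (false, l, true)).subset fun _ ⟨h₁, h₂, h₃⟩ =>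
    Prod.ext h₁ (Prod.ext h₂ h₃)
  not_step_start := by simp [single]
  not_step_accept := by simp [single]
  lang_nonempty := by simp [lang_single]

end Automaton

theorem concatLangs_nonempty : ∀ Ls : List (Set (List ℕ)), (∀ L ∈ Ls, L.Nonempty) →
    (ConcatLangs Ls).Nonempty
  | [], _ => ⟨[], rfl⟩
  | L :: Ls, h =>
    let ⟨u, hu⟩ := h L (by simp)
    let ⟨v, hv⟩ := concatLangs_nonempty Ls fun L' hL' => h L' (by simp [hL'])
    ⟨u ++ v, u, v, hu, hv, rfl⟩

section Choice

variable {n : ℕ} (sE eE : Set (Fin n)) (ed : Fin n → Fin n → Prop)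

inductive ChoiceTail : Fin n → List (Fin n) → Prop
  | last {i : Fin n} : i ∈ eE → ChoiceTail i []
  | cons {i j : Fin n} {p : List (Fin n)} : ed i j → ChoiceTail j p → ChoiceTail i (j :: p)

variable {sE eE ed}

theorem choiceTail_iff {i : Fin n} {p : List (Fin n)} :
    ChoiceTail eE ed i p ↔
      (i :: p).getLast (List.cons_ne_nil i p) ∈ eE ∧ (i :: p).IsChain ed := by
  induction p generalizing i with
  | nil =>
    constructor
    · rintro ⟨h⟩
      exact ⟨h, .singleton i⟩
    · exact fun ⟨h, _⟩ => .last h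
  | cons j p ih =>
    rw [List.getLast_cons (List.cons_ne_nil j p), List.isChain_cons_cons]
    constructor
    · intro h
      cases h with
      | cons hij ht => exact ⟨(ih.1 ht).1, hij, (ih.1 ht).2⟩
    · exact fun ⟨hl, hij, hc⟩ => .cons hij (ih.2 ⟨hl, hc⟩)

theorem cgPath_cons_iff {i : Fin n} {p : List (Fin n)} :
    CGPath sE eE ed (i :: p) ↔ i ∈ sE ∧ ChoiceTail eE ed i p := by
  rw [choiceTail_iff]
  exact ⟨fun ⟨_, h⟩ => h, fun h => ⟨List.cons_ne_nil i p, h⟩⟩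

namespace Automaton

variable {β : Fin n → Type*} (sE eE ed) (A : ∀ i, Automaton (β i))

/-- `none` is a fresh initial state, `some none` a fresh final state, and
`some (some ⟨i, s⟩)` is the state `s` of the `i`-th child. -/
inductive ChoiceStep :
    Option (Option (Σ i, β i)) → Option ℕ → Option (Option (Σ i, β i)) → Prop
  | enter {i : Fin n} : i ∈ sE → ChoiceStep none none (some (some ⟨i, (A i).start⟩))
  | inner {i : Fin n} {a b : β i} {l : Option ℕ} :
      (A i).step a l b → ChoiceStep (some (some ⟨i, a⟩)) l (some (some ⟨i, b⟩))
  | hop {i j : Fin n} : ed i j →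
      ChoiceStep (some (some ⟨i, (A i).accept⟩)) none (some (some ⟨j, (A j).start⟩))
  | leave {i : Fin n} : i ∈ eE → ChoiceStep (some (some ⟨i, (A i).accept⟩)) none (some none)

def choice : Automaton (Option (Option (Σ i, β i))) where
  step := ChoiceStep sE eE ed A
  start := none
  accept := some none

variable {sE eE ed A}

theorem Path.lift_choice {i : Fin n} {a b : β i} {w : List ℕ} (h : (A i).Path a w b) :
    (choice sE eE ed A).Path (some (some ⟨i, a⟩)) w (some (some ⟨i, b⟩)) := by
  induction h with
  | refl => exact .refl _
  | cons hs _ ih => exact .cons (.inner hs) ih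

theorem _root_.ChoiceTail.choice_path {i : Fin n} {p : List (Fin n)} (hp : ChoiceTail eE ed i p)
    {σ : List ℕ} (hσ : σ ∈ ConcatLangs ((i :: p).map fun j => (A j).lang)) :
    (choice sE eE ed A).Path (some (some ⟨i, (A i).start⟩)) σ (some none) := by
  induction hp generalizing σ with
  | last hi =>
    obtain ⟨u, _, hu, rfl, rfl⟩ := hσ
    simpa using hu.lift_choice.append (Path.single (ChoiceStep.leave hi))
  | cons hij _ ih =>
    obtain ⟨u, v, hu, hv, rfl⟩ := hσ
    simpa using hu.lift_choice.append ((Path.single (ChoiceStep.hop hij)).append (ih hv))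

theorem exists_choiceTail_of_path {x y : Option (Option (Σ i, β i))} {w : List ℕ}
    (h : (choice sE eE ed A).Path x w y) (hy : y = some none) {i : Fin n} {s : β i}
    (hx : x = some (some ⟨i, s⟩)) :
    ∃ u p v, (A i).Path s u (A i).accept ∧ ChoiceTail eE ed i p ∧
      v ∈ ConcatLangs (p.map fun j => (A j).lang) ∧ w = u ++ v := by
  induction h generalizing i s with
  | refl => simp_all
  | cons hs hp ih =>
    subst hx
    cases hs with
    | inner hs =>
      obtain ⟨u, p, v, hu, ht, hv, rfl⟩ := ih hy rfl
      exact ⟨_, p, v, .cons hs hu, ht, hv, by simp⟩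
    | hop hij =>
      obtain ⟨u, p, v, hu, ht, hv, rfl⟩ := ih hy rfl
      exact ⟨[], _, _, .refl _, .cons hij ht, ⟨u, v, hu, hv, rfl⟩, rfl⟩
    | leave hi =>
      subst hy
      have hstop : ∀ l b, ¬ (choice sE eE ed A).step (some none) l b := nofun
      obtain ⟨rfl, -⟩ := hp.eq_nil_of_forall_not_step hstop
      exact ⟨[], [], [], .refl _, .last hi, rfl, rfl⟩

theorem lang_choice : (choice sE eE ed A).lang =
    {σ | ∃ p, CGPath sE eE ed p ∧ σ ∈ ConcatLangs (p.map fun i => (A i).lang)} := by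
  ext σ
  constructor
  · rintro (_ | ⟨hs, hp⟩)
    cases hs with | @enter i hi => ?_
    obtain ⟨u, p, v, hu, ht, hv, rfl⟩ := exists_choiceTail_of_path hp rfl rfl
    exact ⟨i :: p, cgPath_cons_iff.2 ⟨hi, ht⟩, u, v, hu, hv, rfl⟩
  · rintro ⟨_ | ⟨i, p⟩, hp, hσ⟩
    · exact absurd hp fun ⟨h, _⟩ => h rfl
    obtain ⟨hi, ht⟩ := cgPath_cons_iff.1 hp
    exact .cons (ChoiceStep.enter hi) (ht.choice_path hσ)

theorem isWorkflow_choice [∀ i, Finite (β i)] (hA : ∀ i, (A i).IsWorkflow)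
    (hcg : IsChoiceGraph sE eE ed) : (choice sE eE ed A).IsWorkflow where
  finite_edges := by
    refine finite_edges_of_labels (((Set.finite_iUnion fun i =>
      finite_labels (hA i).finite_edges).insert none).subset ?_)
    rintro l ⟨a, b, h⟩
    cases h with
    | inner h => exact .inr (Set.mem_iUnion.2 ⟨_, _, _, h⟩)
    | _ => exact .inl rfl
  not_step_start := nofun
  not_step_accept := nofun
  lang_nonempty := by
    obtain ⟨i, -⟩ := hcg.1
    obtain ⟨p, hp, -⟩ := hcg.2.2.2.2 i
    obtain ⟨σ, hσ⟩ := concatLangs_nonempty (p.map fun j => (A j).lang) (by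
      simpa using fun j _ => (hA j).lang_nonempty)
    exact lang_choice ▸ ⟨σ, p, hp, hσ⟩

end Automaton

end Choice

section Shuffle

variable {n : ℕ} {rel : Fin n → Fin n → Prop}

def proj (W : List (Fin n × ℕ)) (i : Fin n) : List ℕ :=
  (W.filter fun x => x.1 = i).map Prod.snd

@[simp] theorem proj_nil (i : Fin n) : proj [] i = [] := rfl

@[simp] theorem proj_cons_self (i : Fin n) (x : ℕ) (W : List (Fin n × ℕ)) :
    proj ((i, x) :: W) i = x :: proj W i := by
  simp [proj]

theorem proj_cons_of_ne {i j : Fin n} (h : j ≠ i) (x : ℕ) (W : List (Fin n × ℕ)) :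
    proj ((i, x) :: W) j = proj W j := by
  simp [proj, Ne.symm h]

theorem proj_eq_nil {W : List (Fin n × ℕ)} {j : Fin n} :
    proj W j = [] ↔ ∀ y ∈ W, y.1 ≠ j := by
  simp [proj, List.filter_eq_nil_iff]

theorem isShuffle_iff [Std.Irrefl rel] {F : Fin n → List ℕ} {σ : List ℕ} :
    IsShuffle rel F σ ↔ ∃ W : List (Fin n × ℕ), σ = W.map Prod.snd ∧
      (∀ i, proj W i = F i) ∧ W.Pairwise fun x y => ¬ rel y.1 x.1 := by
  suffices h : ∀ W : List (Fin n × ℕ), (∀ a b : Fin W.length, rel (W.get a).1 (W.get b).1 →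
      (a : ℕ) < b) ↔ W.Pairwise fun x y => ¬ rel y.1 x.1 by
    simp only [IsShuffle, h, proj]
  intro W
  rw [List.pairwise_iff_get]
  refine ⟨fun h a b hab hr => absurd (h b a hr) (by omega), fun h a b hr => ?_⟩
  rcases lt_trichotomy (a : ℕ) b with hab | hab | hab
  · exact hab
  · cases Fin.ext hab
    exact absurd hr (irrefl_of rel _)
  · exact absurd hr (h b a hab)

namespace Automaton

variable (rel) {β : Fin n → Type*} (A : ∀ i, Automaton (β i))

/-- Final states have no outgoing steps, so once a child has moved its predecessors are frozen in
their final states: this is what enforces the partial order. -/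
def shuffle : Automaton (∀ i, β i) where
  step f l g := ∃ i b, (A i).step (f i) l b ∧ (∀ j, rel j i → f j = (A j).accept) ∧
    g = Function.update f i b
  start i := (A i).start
  accept i := (A i).accept

variable {rel A}

theorem Path.lift_shuffle [Std.Irrefl rel] {i : Fin n} {s t : β i} {w : List ℕ}
    (h : (A i).Path s w t) {f : ∀ i, β i} (hf : f i = s)
    (hgate : ∀ j, rel j i → f j = (A j).accept) :
    (shuffle rel A).Path f w (Function.update f i t) := by
  induction h generalizing f with
  | refl => subst hf; simpa using Path.refl (A := shuffle rel A) f
  | @cons s b t l w hs _ ih =>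
    subst hf
    have hupd := ih (f := Function.update f i b) (by simp) fun j hj => by
      rw [Function.update_of_ne (ne_of_irrefl hj)]; exact hgate j hj
    rw [Function.update_idem] at hupd
    exact .cons ⟨i, b, hs, hgate, rfl⟩ hupd

theorem exists_shuffle_path_to_accept [Std.Irrefl rel] [IsTrans (Fin n) rel]
    {S : Finset (Fin n)} {f : ∀ i, β i} {u : Fin n → List ℕ}
    (hS : ∀ j ∈ S, ∀ k, rel k j → k ∈ S ∨ f k = (A k).accept)
    (hu : ∀ j ∈ S, (A j).Path (f j) (u j) (A j).accept) :
    ∃ w g, (shuffle rel A).Path f w g ∧ (∀ j ∈ S, g j = (A j).accept) ∧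
      (∀ j ∉ S, g j = f j) ∧ ∀ x ∈ w, ∃ j ∈ S, x ∈ u j := by
  induction S using Finset.strongInduction generalizing f with
  | H S ih =>
  rcases S.eq_empty_or_nonempty with rfl | hne
  · exact ⟨[], f, .refl f, by simp, fun _ _ => rfl, by simp⟩
  -- run a child that is minimal in `S` to completion, then recurse on the others
  obtain ⟨j, hj, hmin⟩ :=
    (Finite.wellFounded_of_trans_of_irrefl rel).has_min (S : Set (Fin n)) hne
  have hgate : ∀ k, rel k j → f k = (A k).accept := fun k hk =>
    (hS j hj k hk).resolve_left fun hkS => hmin k hkS hk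
  set f' := Function.update f j (A j).accept
  have hf' : ∀ k ≠ j, f' k = f k := fun k hk => Function.update_of_ne hk _ _
  obtain ⟨w, g, hw, hgS, hgS', hlet⟩ := ih (S.erase j) (Finset.erase_ssubset hj) (f := f')
    (fun k hk m hm => by
      by_cases hmj : m = j
      · subst hmj; exact .inr (by simp [f'])
      · rw [Finset.mem_erase, hf' m hmj]
        exact (hS k (Finset.mem_of_mem_erase hk) m hm).imp_left (⟨hmj, ·⟩))
    (fun k hk => by
      rw [hf' k (Finset.ne_of_mem_erase hk)]; exact hu k (Finset.mem_of_mem_erase hk))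
  refine ⟨u j ++ w, g, ((hu j hj).lift_shuffle rfl hgate).append hw, fun k hk => ?_,
    fun k hk => ?_, fun x hx => ?_⟩
  · by_cases hkj : k = j
    · subst hkj; simpa [f'] using hgS' k (by simp)
    · exact hgS k (Finset.mem_erase.2 ⟨hkj, hk⟩)
  · have hkj : k ≠ j := fun h => hk (h ▸ hj)
    rw [hgS' k (fun h => hk (Finset.mem_of_mem_erase h)), hf' k hkj]
  · rcases List.mem_append.1 hx with hx | hx
    · exact ⟨j, hj, hx⟩
    · obtain ⟨k, hk, hxk⟩ := hlet x hx
      exact ⟨k, Finset.mem_of_mem_erase hk, hxk⟩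

theorem shuffle_path_of_pairwise [Std.Irrefl rel] [IsTrans (Fin n) rel]
    {W : List (Fin n × ℕ)} (hW : W.Pairwise fun x y => ¬ rel y.1 x.1) {f : ∀ i, β i}
    (hf : ∀ i, (A i).Path (f i) (proj W i) (A i).accept) :
    (shuffle rel A).Path f (W.map Prod.snd) (shuffle rel A).accept := by
  induction W generalizing f with
  | nil =>
    obtain ⟨w, g, hw, hg, -, hlet⟩ := exists_shuffle_path_to_accept (rel := rel)
      (S := Finset.univ) (u := fun _ => []) (by simp) (by simpa using hf)
    obtain rfl : g = (shuffle rel A).accept := funext fun j => hg j (Finset.mem_univ j)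
    obtain rfl : w = [] := List.eq_nil_iff_forall_not_mem.2 fun x hx => by simpa using hlet x hx
    exact hw
  | cons y W ih =>
    obtain ⟨i, x⟩ := y
    obtain ⟨hiW, hW⟩ := List.pairwise_cons.1 hW
    have hpred : ∀ j, rel j i → proj W j = [] :=
      fun j hj => proj_eq_nil.2 fun y hy hyj => hiW y hy (hyj ▸ hj)
    obtain ⟨w, g, hfg, hgS, hgS', hlet⟩ := exists_shuffle_path_to_accept (A := A)
      (S := Finset.univ.filter (rel · i)) (f := f) (u := fun _ => [])
      (fun j hj k hk => .inl (by simpa using trans_of rel hk (by simpa using hj)))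
      (fun j hj => by
        have hji : rel j i := by simpa using hj
        simpa [proj_cons_of_ne (ne_of_irrefl hji), hpred j hji] using hf j)
    obtain rfl : w = [] := List.eq_nil_iff_forall_not_mem.2 fun x hx => by simpa using hlet x hx
    have hgi : g i = f i := hgS' i (by simpa using irrefl_of rel i)
    obtain ⟨b, hxb, hb⟩ := Path.exists_of_append (u := [x]) (by simpa using hf i)
    have hstep := hxb.lift_shuffle hgi fun j hj => hgS j (by simpa using hj)
    have hrest : ∀ j, (A j).Path (Function.update g i b j) (proj W j) (A j).accept := by
      intro j
      by_cases hji : j = i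
      · subst hji; simpa using hb
      rw [Function.update_of_ne hji]
      by_cases hrel : rel j i
      · rw [hgS j (by simpa using hrel), hpred j hrel]; exact .refl _
      · rw [hgS' j (by simpa using hrel), ← proj_cons_of_ne hji x]; exact hf j
    simpa using hfg.append (hstep.append (ih hW hrest))

theorem exists_pairwise_of_shuffle_path [Std.Irrefl rel]
    (hA : ∀ i l b, ¬ (A i).step (A i).accept l b) {f : ∀ i, β i} {w : List ℕ}
    (h : (shuffle rel A).Path f w (shuffle rel A).accept) :
    ∃ W : List (Fin n × ℕ), w = W.map Prod.snd ∧ (W.Pairwise fun x y => ¬ rel y.1 x.1) ∧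
      ∀ i, (A i).Path (f i) (proj W i) (A i).accept := by
  generalize hg : (shuffle rel A).accept = g at h
  induction h with
  | refl => subst hg; exact ⟨[], rfl, .nil, fun i => .refl _⟩
  | @cons f _ g l w hs _ ih =>
    obtain ⟨i, b, hs, hgate, rfl⟩ := hs
    obtain ⟨W, rfl, hW, hpath⟩ := ih hg
    have hother : ∀ j ≠ i, (A j).Path (f j) (proj W j) (A j).accept := fun j hj => by
      simpa [Function.update_of_ne hj] using hpath j
    have hself : (A i).Path (f i) (l.toList ++ proj W i) (A i).accept :=
      .cons hs (by simpa using hpath i)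
    rcases l with _ | x
    · refine ⟨W, rfl, hW, fun j => ?_⟩
      by_cases hji : j = i
      · subst hji; simpa using hself
      · exact hother j hji
    -- a predecessor of `i` is already final, so it contributes no later letters
    have hpred : ∀ y ∈ W, ¬ rel y.1 i := fun y hy hyi => by
      have hfin : Function.update f i b y.1 = (A y.1).accept := by
        rw [Function.update_of_ne (ne_of_irrefl hyi)]; exact hgate _ hyi
      have hnil := ((hpath y.1).eq_nil_of_forall_not_step (hfin ▸ hA y.1)).1
      exact proj_eq_nil.1 hnil y hy rfl
    refine ⟨(i, x) :: W, rfl, List.pairwise_cons.2 ⟨hpred, hW⟩, fun j => ?_⟩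
    by_cases hji : j = i
    · subst hji; simpa using hself
    · rw [proj_cons_of_ne hji]; exact hother j hji

theorem lang_shuffle [Std.Irrefl rel] [IsTrans (Fin n) rel]
    (hA : ∀ i l b, ¬ (A i).step (A i).accept l b) :
    (shuffle rel A).lang =
      {σ | ∃ F : Fin n → List ℕ, (∀ i, F i ∈ (A i).lang) ∧ IsShuffle rel F σ} := by
  ext σ
  constructor
  · intro hσ
    obtain ⟨W, rfl, hW, hpath⟩ := exists_pairwise_of_shuffle_path hA hσ
    exact ⟨proj W, hpath, isShuffle_iff.2 ⟨W, rfl, fun _ => rfl, hW⟩⟩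
  · rintro ⟨F, hF, hσ⟩
    obtain ⟨W, rfl, hWF, hW⟩ := isShuffle_iff.1 hσ
    exact shuffle_path_of_pairwise hW fun i => hWF i ▸ hF i

theorem isWorkflow_shuffle [∀ i, Finite (β i)] [Std.Irrefl rel] [IsTrans (Fin n) rel]
    (hA : ∀ i, (A i).IsWorkflow) : (shuffle rel A).IsWorkflow where
  finite_edges := finite_edges_of_labels ((Set.finite_iUnion fun i =>
    finite_labels (hA i).finite_edges).subset fun l ⟨f, _, i, b, hs, _⟩ =>
      Set.mem_iUnion.2 ⟨i, f i, b, hs⟩)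
  not_step_start f l := fun ⟨i, b, hs, _, hb⟩ => by
    have hbi : (A i).start = b := by simpa [shuffle] using congrFun hb i
    exact (hA i).not_step_start (f i) l (hbi ▸ hs)
  not_step_accept l g := fun ⟨i, b, hs, _⟩ => (hA i).not_step_accept l b hs
  lang_nonempty := by
    choose u hu using fun i => (hA i).lang_nonempty
    obtain ⟨w, g, hw, hg, -⟩ := exists_shuffle_path_to_accept (rel := rel) (S := Finset.univ)
      (f := (shuffle rel A).start) (u := u) (by simp) fun j _ => hu j
    obtain rfl : g = (shuffle rel A).accept := funext fun j => hg j (Finset.mem_univ j)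
    exact ⟨w, hw⟩

end Automaton

end Shuffle

open Automaton in
theorem POWL.exists_automaton (ψ : POWL) (hψ : ψ.WF) :
    ∃ (γ : Type) (_ : Fintype γ) (A : Automaton γ), A.IsWorkflow ∧ A.lang = ψ.lang := by
  induction ψ with
  | ptrans l =>
    refine ⟨Bool, inferInstance, single l, isWorkflow_single l, ?_⟩
    cases l <;> simp [lang_single, POWL.lang]
  | po n rel ch ih =>
    obtain ⟨-, hirr, htr, hch⟩ := hψ
    choose β _ A hA hL using fun i => ih i (hch i)
    have : Std.Irrefl rel := ⟨hirr⟩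
    have : IsTrans (Fin n) rel := ⟨fun _ _ _ => @htr _ _ _⟩
    refine ⟨_, inferInstance, shuffle rel A, isWorkflow_shuffle hA, ?_⟩
    simp only [lang_shuffle fun i => (hA i).not_step_accept, POWL.lang, hL]
  | cg n sE eE ed ch ih =>
    obtain ⟨-, hcg, hch⟩ := hψ
    choose β _ A hA hL using fun i => ih i (hch i)
    refine ⟨_, inferInstance, choice sE eE ed A, isWorkflow_choice hA hcg, ?_⟩
    simp only [lang_choice, POWL.lang, hL]

/-- For every POWL 2.0 model ψ there exists a safe and sound
separable WF-net N with L(N) = L(ψ). -/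
theorem powl_has_separable_wfnet_representation
    (ψ : POWL) (hwf : ψ.WF) :
    ∃ N : Net, N.IsWF ∧ Separable N ∧ N.Safe ∧ N.Sound ∧ N.lang = ψ.lang := by
  obtain ⟨γ, _, A, hA, hlang⟩ := POWL.exists_automaton ψ hwf
  let _ := Fintype.toEncodable γ
  exact ⟨A.toNet hA.finite_edges, hA.isWF_toNet,
    .sm _ hA.isWF_toNet (Automaton.isStateMachine_toNet _), Automaton.safe_toNet _,
    hA.sound_toNet, (Automaton.lang_toNet _).trans hlang⟩

end
end
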